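/- arXiv:2303.07777 — 7 statements merged into one kernel-verified Lean document; each statement's English description precedes it below -/
import Mathlib

section
/- The monoid SL(2,ℕ) of 2×2 integer matrices with nonnegative entries and determinant 1 is freely generated by the matrices L = [[1,0],[1,1]] and R = [[1,1],[0,1]]: every matrix in SL(2,ℕ) admits a unique factorization as a finite product of L's and R's. -/
/-!
A nonnegative unimodular matrix `!![a, b; c, d]` other than `1` has comparable rows: if, say,
`c < a` and `b < d`, then `1 = ad - bc ≥ (b + 1)(c + 1) - bc` forces `b = c = 0` and `a = d = 1`.
Subtracting the smaller row from the larger one is left multiplication by `R⁻¹` or `L⁻¹`; it keeps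
the matrix nonnegative and unimodular and lowers the sum of its entries, which gives the
factorization. Conversely, every nonnegative `L * A` has its first row below its second and every
nonnegative `R * A` the reverse, while `1` has incomparable rows; so the first letter of a word is
read off from its product, and unique factorization follows by cancelling it.
-/

namespace SL2Nat

open Matrix

def L : Matrix (Fin 2) (Fin 2) ℤ := !![1, 0; 1, 1]

def R : Matrix (Fin 2) (Fin 2) ℤ := !![1, 1; 0, 1]

def wordProd (w : List Bool) : Matrix (Fin 2) (Fin 2) ℤ :=
  (w.map fun b => if b then L else R).prod

@[simp]
lemma wordProd_nil : wordProd [] = 1 := rfl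

lemma wordProd_cons (b : Bool) (w : List Bool) :
    wordProd (b :: w) = (if b then L else R) * wordProd w := by
  simp [wordProd]

lemma det_L : L.det = 1 := by simp [L, det_fin_two_of]

lemma det_R : R.det = 1 := by simp [R, det_fin_two_of]

lemma L_mul_of (a b c d : ℤ) : L * !![a, b; c, d] = !![a, b; a + c, b + d] := by
  simp [L]

lemma R_mul_of (a b c d : ℤ) : R * !![a, b; c, d] = !![a + c, b + d; c, d] := by
  simp [R]

lemma L_mul_nonneg {A : Matrix (Fin 2) (Fin 2) ℤ} (hA : ∀ i j, 0 ≤ A i j) (i j : Fin 2) :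
    0 ≤ (L * A) i j := by
  rw [eta_fin_two A, L_mul_of]
  fin_cases i <;> fin_cases j <;> simp <;> linarith [hA 0 0, hA 0 1, hA 1 0, hA 1 1]

lemma R_mul_nonneg {A : Matrix (Fin 2) (Fin 2) ℤ} (hA : ∀ i j, 0 ≤ A i j) (i j : Fin 2) :
    0 ≤ (R * A) i j := by
  rw [eta_fin_two A, R_mul_of]
  fin_cases i <;> fin_cases j <;> simp <;> linarith [hA 0 0, hA 0 1, hA 1 0, hA 1 1]

lemma L_mul_row_le {A : Matrix (Fin 2) (Fin 2) ℤ} (hA : ∀ i j, 0 ≤ A i j) (j : Fin 2) :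
    (L * A) 0 j ≤ (L * A) 1 j := by
  rw [eta_fin_two A, L_mul_of]
  fin_cases j <;> simp [hA]

lemma R_mul_row_le {A : Matrix (Fin 2) (Fin 2) ℤ} (hA : ∀ i j, 0 ≤ A i j) (j : Fin 2) :
    (R * A) 1 j ≤ (R * A) 0 j := by
  rw [eta_fin_two A, R_mul_of]
  fin_cases j <;> simp [hA]

lemma det_wordProd (w : List Bool) : (wordProd w).det = 1 := by
  induction w with
  | nil => simp
  | cons b w ih => cases b <;> simp [wordProd_cons, det_mul, ih, det_L, det_R]

lemma wordProd_nonneg (w : List Bool) (i j : Fin 2) : 0 ≤ wordProd w i j := by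
  induction w generalizing i j with
  | nil => fin_cases i <;> fin_cases j <;> simp
  | cons b w ih =>
    cases b
    · exact R_mul_nonneg ih i j
    · exact L_mul_nonneg ih i j

lemma wordProd_cons_ne_one (b : Bool) (w : List Bool) : wordProd (b :: w) ≠ 1 := by
  intro h
  rw [wordProd_cons] at h
  cases b <;> simp only [Bool.false_eq_true, ite_true, ite_false] at h
  · simpa [h] using R_mul_row_le (wordProd_nonneg w) 1
  · simpa [h] using L_mul_row_le (wordProd_nonneg w) 0

lemma L_mul_ne_R_mul (v w : List Bool) : L * wordProd v ≠ R * wordProd w := by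
  intro h
  have hrows : (R * wordProd w) 0 = (R * wordProd w) 1 := funext fun j =>
    le_antisymm (h ▸ L_mul_row_le (wordProd_nonneg v) j) (R_mul_row_le (wordProd_nonneg w) j)
  have := det_zero_of_row_eq (by decide) hrows
  simp [det_mul, det_R, det_wordProd] at this

lemma wordProd_injective : Function.Injective wordProd := by
  intro v
  induction v with
  | nil =>
    rintro (_ | ⟨b, w⟩) h
    · rfl
    · exact absurd h.symm (wordProd_cons_ne_one b w)
  | cons a v ih =>
    rintro (_ | ⟨b, w⟩) h
    · exact absurd h (wordProd_cons_ne_one a v)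
    have hL : IsUnit L := (isUnit_iff_isUnit_det L).2 (by simp [det_L])
    have hR : IsUnit R := (isUnit_iff_isUnit_det R).2 (by simp [det_R])
    simp only [wordProd_cons] at h
    cases a <;> cases b <;> simp only [Bool.false_eq_true, ite_true, ite_false] at h
    · rw [ih (hR.mul_left_cancel h)]
    · exact absurd h.symm (L_mul_ne_R_mul w v)
    · exact absurd h (L_mul_ne_R_mul v w)
    · rw [ih (hL.mul_left_cancel h)]

lemma eq_one_or_rows_le {a b c d : ℤ} (ha : 0 ≤ a) (hb : 0 ≤ b) (hc : 0 ≤ c) (hd : 0 ≤ d)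
    (hdet : a * d - b * c = 1) :
    (a = 1 ∧ b = 0 ∧ c = 0 ∧ d = 1) ∨ (c ≤ a ∧ d ≤ b) ∨ (a ≤ c ∧ b ≤ d) := by
  rcases le_or_gt c a with hca | hac <;> rcases le_or_gt d b with hdb | hbd
  · exact .inr (.inl ⟨hca, hdb⟩)
  · rcases hca.eq_or_lt with rfl | hca
    · exact .inr (.inr ⟨le_rfl, hbd.le⟩)
    · have hb0 : b = 0 := by nlinarith
      have hc0 : c = 0 := by nlinarith
      subst hb0 hc0
      exact .inl ⟨by nlinarith, rfl, rfl, by nlinarith⟩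
  · nlinarith [mul_le_mul_of_nonneg_right hac.le hd, mul_le_mul_of_nonneg_left hdb hc]
  · exact .inr (.inr ⟨hac.le, hbd.le⟩)

theorem exists_wordProd_eq (a b c d : ℤ) (ha : 0 ≤ a) (hb : 0 ≤ b) (hc : 0 ≤ c) (hd : 0 ≤ d)
    (hdet : a * d - b * c = 1) : ∃ w, wordProd w = !![a, b; c, d] := by
  rcases eq_one_or_rows_le ha hb hc hd hdet with ⟨rfl, rfl, rfl, rfl⟩ | ⟨hca, hdb⟩ | ⟨hac, hbd⟩
  · exact ⟨[], by simp [one_fin_two]⟩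
  · have hcd : 0 < c + d := by nlinarith
    obtain ⟨w, hw⟩ := exists_wordProd_eq (a - c) (b - d) c d (by omega) (by omega) hc hd
      (by linarith)
    exact ⟨false :: w, by simp [wordProd_cons, hw, R_mul_of]⟩
  · have hab : 0 < a + b := by nlinarith
    obtain ⟨w, hw⟩ := exists_wordProd_eq a b (c - a) (d - b) ha hb (by omega) (by omega)
      (by linarith)
    exact ⟨true :: w, by simp [wordProd_cons, hw, L_mul_of]⟩
termination_by (a + b + c + d).toNat
decreasing_by all_goals omega

end SL2Nat

/-- `SL(2,ℕ)` is freely generated by `L = [[1,0],[1,1]]` and `R = [[1,1],[0,1]]`: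
every nonnegative unimodular 2×2 integer matrix admits a unique factorization as a
finite product of `L`'s and `R`'s. -/
theorem sl2_nat_free (M : Matrix (Fin 2) (Fin 2) ℤ)
    (hpos : ∀ i j, 0 ≤ M i j) (hdet : M.det = 1) :
    ∃! w : List Bool,
      (w.map (fun b => if b then (!![1,0;1,1] : Matrix (Fin 2) (Fin 2) ℤ)
        else (!![1,1;0,1] : Matrix (Fin 2) (Fin 2) ℤ))).prod = M := by
  rw [Matrix.det_fin_two] at hdet
  obtain ⟨w, hw⟩ :=
    SL2Nat.exists_wordProd_eq _ _ _ _ (hpos 0 0) (hpos 0 1) (hpos 1 0) (hpos 1 1) hdet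
  rw [← Matrix.eta_fin_two M] at hw
  exact ⟨w, hw, fun v hv => SL2Nat.wordProd_injective (hv.trans hw.symm)⟩
end

section
/- For every integer n ≥ 3, the matrix M_n = [[1,0,n],[1,n−1,0],[1,1,n−1]] lies in SL(3,ℕ) and is undecomposable: M_n is not a permutation matrix, and for any factorization M_n = A·B with A, B ∈ SL(3,ℕ), either A or B is a permutation matrix (necessarily of determinant 1). -/
/-- `A` is a permutation matrix. -/
def IsPermMat (A : Matrix (Fin 3) (Fin 3) ℤ) : Prop :=
  ∃ σ : Equiv.Perm (Fin 3), ∀ i j, A i j = if σ i = j then 1 else 0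

private lemma sign_contra {d x y : ℤ} (hx : 0 ≤ x) (hy : 0 ≤ y)
    (h1 : d * x < 0) (h2 : 0 < d * y) : False := by
  rcases lt_trichotomy d 0 with h | h | h
  · nlinarith
  · subst h; simp at h2
  · nlinarith

private lemma col_entry_zero {a b p q : ℤ} (ha : 0 ≤ a) (hb : 2 ≤ b)
    (hp : 0 ≤ p) (hq : 0 ≤ q) (h : a * b + p + q = 1) : a = 0 := by
  by_contra hc
  have h1 : 1 ≤ a := by omega
  nlinarith

private lemma mzr {a b : ℤ} (ha : 1 ≤ a) (h : a * b = 0) : b = 0 := by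
  rcases mul_eq_zero.mp h with h' | h'
  · omega
  · exact h'

private lemma mzl {a b : ℤ} (hb : 1 ≤ b) (h : a * b = 0) : a = 0 := by
  rcases mul_eq_zero.mp h with h' | h'
  · exact h'
  · omega

private lemma mul_one_one {a b : ℤ} (ha : 1 ≤ a) (hb : 1 ≤ b) (h : a * b = 1) :
    a = 1 ∧ b = 1 := by
  constructor <;> nlinarith

private lemma pos_of_det {a b c d : ℤ} (ha : 0 ≤ a) (hb : 0 ≤ b) (hc : 0 ≤ c)
    (hd : 0 ≤ d) (h : a * b - c * d = 1) : 1 ≤ a ∧ 1 ≤ b := by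
  constructor <;> nlinarith [mul_nonneg hc hd]

private lemma key (n a00 a01 a02 a10 a11 a12 a20 a21 a22
    b00 b01 b02 b10 b11 b12 b20 b21 b22 : ℤ)
    (hn : 3 ≤ n)
    (ha00 : 0 ≤ a00) (ha01 : 0 ≤ a01) (ha02 : 0 ≤ a02)
    (ha10 : 0 ≤ a10) (ha11 : 0 ≤ a11) (ha12 : 0 ≤ a12)
    (ha20 : 0 ≤ a20) (ha21 : 0 ≤ a21) (ha22 : 0 ≤ a22)
    (hb00 : 0 ≤ b00) (hb01 : 0 ≤ b01) (hb02 : 0 ≤ b02)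
    (hb10 : 0 ≤ b10) (hb11 : 0 ≤ b11) (hb12 : 0 ≤ b12)
    (hb20 : 0 ≤ b20) (hb21 : 0 ≤ b21) (hb22 : 0 ≤ b22)
    (hdA : a00*a11*a22 - a00*a12*a21 - a01*a10*a22 + a01*a12*a20
        + a02*a10*a21 - a02*a11*a20 = 1)
    (hdB : b00*b11*b22 - b00*b12*b21 - b01*b10*b22 + b01*b12*b20
        + b02*b10*b21 - b02*b11*b20 = 1)
    (e00 : a00*b00 + a01*b10 + a02*b20 = 1)
    (e01 : a00*b01 + a01*b11 + a02*b21 = 0)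
    (e02 : a00*b02 + a01*b12 + a02*b22 = n)
    (e10 : a10*b00 + a11*b10 + a12*b20 = 1)
    (e11 : a10*b01 + a11*b11 + a12*b21 = n - 1)
    (e12 : a10*b02 + a11*b12 + a12*b22 = 0)
    (e20 : a20*b00 + a21*b10 + a22*b20 = 1)
    (e21 : a20*b01 + a21*b11 + a22*b21 = 1)
    (e22 : a20*b02 + a21*b12 + a22*b22 = n - 1) :
    IsPermMat !![a00,a01,a02;a10,a11,a12;a20,a21,a22] ∨
    IsPermMat !![b00,b01,b02;b10,b11,b12;b20,b21,b22] := by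
  -- column 0 of B consists of 0s and 1s
  have k0 : b00 ≤ 1 := by
    by_contra h; push_neg at h
    have h0 : a00 = 0 := col_entry_zero ha00 (show (2:ℤ) ≤ b00 by omega)
      (mul_nonneg ha01 hb10) (mul_nonneg ha02 hb20) e00
    have h1 : a10 = 0 := col_entry_zero ha10 (show (2:ℤ) ≤ b00 by omega)
      (mul_nonneg ha11 hb10) (mul_nonneg ha12 hb20) e10
    have h2 : a20 = 0 := col_entry_zero ha20 (show (2:ℤ) ≤ b00 by omega)
      (mul_nonneg ha21 hb10) (mul_nonneg ha22 hb20) e20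
    rw [h0, h1, h2] at hdA; ring_nf at hdA; omega
  have k1 : b10 ≤ 1 := by
    by_contra h; push_neg at h
    have h0 : a01 = 0 := col_entry_zero ha01 (show (2:ℤ) ≤ b10 by omega)
      (mul_nonneg ha00 hb00) (mul_nonneg ha02 hb20)
      (show a01*b10 + a00*b00 + a02*b20 = 1 by linear_combination e00)
    have h1 : a11 = 0 := col_entry_zero ha11 (show (2:ℤ) ≤ b10 by omega)
      (mul_nonneg ha10 hb00) (mul_nonneg ha12 hb20)
      (show a11*b10 + a10*b00 + a12*b20 = 1 by linear_combination e10)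
    have h2 : a21 = 0 := col_entry_zero ha21 (show (2:ℤ) ≤ b10 by omega)
      (mul_nonneg ha20 hb00) (mul_nonneg ha22 hb20)
      (show a21*b10 + a20*b00 + a22*b20 = 1 by linear_combination e20)
    rw [h0, h1, h2] at hdA; ring_nf at hdA; omega
  have k2 : b20 ≤ 1 := by
    by_contra h; push_neg at h
    have h0 : a02 = 0 := col_entry_zero ha02 (show (2:ℤ) ≤ b20 by omega)
      (mul_nonneg ha00 hb00) (mul_nonneg ha01 hb10)
      (show a02*b20 + a00*b00 + a01*b10 = 1 by linear_combination e00)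
    have h1 : a12 = 0 := col_entry_zero ha12 (show (2:ℤ) ≤ b20 by omega)
      (mul_nonneg ha10 hb00) (mul_nonneg ha11 hb10)
      (show a12*b20 + a10*b00 + a11*b10 = 1 by linear_combination e10)
    have h2 : a22 = 0 := col_entry_zero ha22 (show (2:ℤ) ≤ b20 by omega)
      (mul_nonneg ha20 hb00) (mul_nonneg ha21 hb10)
      (show a22*b20 + a20*b00 + a21*b10 = 1 by linear_combination e20)
    rw [h0, h1, h2] at hdA; ring_nf at hdA; omega
  rcases (by omega : b00 = 0 ∨ b00 = 1) with c0 | c0 <;>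
    rcases (by omega : b10 = 0 ∨ b10 = 1) with c1 | c1 <;>
      rcases (by omega : b20 = 0 ∨ b20 = 1) with c2 | c2 <;>
        subst c0 <;> subst c1 <;> subst c2
  -- case (0,0,0): impossible
  · exfalso
    have p1 : 0 ≤ a00 * 0 := by simp
    simp only [mul_zero, add_zero, zero_add] at e00
    exact absurd e00 (by omega)
  · -- case b = (0,0,1)
    have hA02 : a02 = 1 := by linear_combination e00
    have hA12 : a12 = 1 := by linear_combination e10
    have hA22 : a22 = 1 := by linear_combination e20
    subst hA02 hA12 hA22
    have p1 : 0 ≤ a00*b01 := mul_nonneg ha00 hb01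
    have p2 : 0 ≤ a01*b11 := mul_nonneg ha01 hb11
    have hb21v : b21 = 0 := by linarith
    have hq1 : a00*b01 = 0 := by linarith
    have hq2 : a01*b11 = 0 := by linarith
    have p3 : 0 ≤ a10*b02 := mul_nonneg ha10 hb02
    have p4 : 0 ≤ a11*b12 := mul_nonneg ha11 hb12
    have hb22v : b22 = 0 := by linarith
    have hq3 : a10*b02 = 0 := by linarith
    have hq4 : a11*b12 = 0 := by linarith
    subst hb21v hb22v
    have hv : b01*b12 - b02*b11 = 1 := by linear_combination hdB
    obtain ⟨hb01p, hb12p⟩ := pos_of_det hb01 hb12 hb02 hb11 hv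
    have hA00 : a00 = 0 := mzl hb01p hq1
    have hA11 : a11 = 0 := mzl hb12p hq4
    subst hA00 hA11
    have hA01p : 1 ≤ a01 := by
      rcases le_or_gt 1 a01 with h | h
      · exact h
      · have h0 : a01 = 0 := by omega
        rw [h0] at e02; simp at e02; omega
    have hb11v : b11 = 0 := mzr hA01p hq2
    have hA10p : 1 ≤ a10 := by
      rcases le_or_gt 1 a10 with h | h
      · exact h
      · have h0 : a10 = 0 := by omega
        rw [h0] at e11; simp at e11; omega
    have hb02v : b02 = 0 := mzr hA10p hq3
    subst hb11v hb02v
    obtain ⟨hb01e, hb12e⟩ := mul_one_one hb01p hb12p (by linear_combination hv)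
    subst hb01e hb12e
    right; unfold IsPermMat; simp only [Matrix.of_apply]; decide
  · -- case b = (0,1,0)
    have hA01 : a01 = 1 := by linear_combination e00
    have hA11 : a11 = 1 := by linear_combination e10
    have hA21 : a21 = 1 := by linear_combination e20
    subst hA01 hA11 hA21
    have p1 : 0 ≤ a00*b01 := mul_nonneg ha00 hb01
    have p2 : 0 ≤ a02*b21 := mul_nonneg ha02 hb21
    have hb11v : b11 = 0 := by linarith
    have hq1 : a00*b01 = 0 := by linarith
    have hq2 : a02*b21 = 0 := by linarith
    have p3 : 0 ≤ a10*b02 := mul_nonneg ha10 hb02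
    have p4 : 0 ≤ a12*b22 := mul_nonneg ha12 hb22
    have hb12v : b12 = 0 := by linarith
    have hq3 : a10*b02 = 0 := by linarith
    have hq4 : a12*b22 = 0 := by linarith
    subst hb11v hb12v
    have hv : b02*b21 - b01*b22 = 1 := by linear_combination hdB
    obtain ⟨hb02p, hb21p⟩ := pos_of_det hb02 hb21 hb01 hb22 hv
    have hA10 : a10 = 0 := mzl hb02p hq3
    have hA02 : a02 = 0 := mzl hb21p hq2
    subst hA10 hA02
    have hA12p : 1 ≤ a12 := by
      rcases le_or_gt 1 a12 with h | h
      · exact h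
      · have h0 : a12 = 0 := by omega
        rw [h0] at e11; simp at e11; omega
    have hb22v : b22 = 0 := mzr hA12p hq4
    have hA00p : 1 ≤ a00 := by
      rcases le_or_gt 1 a00 with h | h
      · exact h
      · have h0 : a00 = 0 := by omega
        rw [h0] at e02; simp at e02; omega
    have hb01v : b01 = 0 := mzr hA00p hq1
    subst hb22v hb01v
    obtain ⟨hb02e, hb21e⟩ := mul_one_one hb02p hb21p (by linear_combination hv)
    subst hb02e hb21e
    right; unfold IsPermMat; simp only [Matrix.of_apply]; decide
  · -- case b = (0,1,1)
    exfalso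
    have r0 : a01 + a02 = 1 := by linear_combination e00
    have r1 : a11 + a12 = 1 := by linear_combination e10
    have r2 : a21 + a22 = 1 := by linear_combination e20
    have tri : (a01 = a11 ∧ a02 = a12) ∨ (a01 = a21 ∧ a02 = a22) ∨
        (a11 = a21 ∧ a12 = a22) := by omega
    rcases tri with ⟨h1, h2⟩ | ⟨h1, h2⟩ | ⟨h1, h2⟩
    · have hx : (a00 - a10) * b01 = 1 - n := by
        linear_combination e01 - e11 - b11*h1 - b21*h2
      have hy : (a00 - a10) * b02 = n := by
        linear_combination e02 - e12 - b12*h1 - b22*h2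
      exact sign_contra hb01 hb02 (by rw [hx]; omega) (by rw [hy]; omega)
    · have hx : (a00 - a20) * b01 = -1 := by
        linear_combination e01 - e21 - b11*h1 - b21*h2
      have hy : (a00 - a20) * b02 = 1 := by
        linear_combination e02 - e22 - b12*h1 - b22*h2
      exact sign_contra hb01 hb02 (by rw [hx]; omega) (by rw [hy]; omega)
    · have hx : (a10 - a20) * b01 = n - 2 := by
        linear_combination e11 - e21 - b11*h1 - b21*h2
      have hy : (a10 - a20) * b02 = 1 - n := by
        linear_combination e12 - e22 - b12*h1 - b22*h2
      exact sign_contra hb02 hb01 (by rw [hy]; omega) (by rw [hx]; omega)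
  · -- case b = (1,0,0)
    have hA00 : a00 = 1 := by linear_combination e00
    have hA10 : a10 = 1 := by linear_combination e10
    have hA20 : a20 = 1 := by linear_combination e20
    subst hA00 hA10 hA20
    have p1 : 0 ≤ a01*b11 := mul_nonneg ha01 hb11
    have p2 : 0 ≤ a02*b21 := mul_nonneg ha02 hb21
    have hb01v : b01 = 0 := by linarith
    have hq1 : a01*b11 = 0 := by linarith
    have hq2 : a02*b21 = 0 := by linarith
    have p3 : 0 ≤ a11*b12 := mul_nonneg ha11 hb12
    have p4 : 0 ≤ a12*b22 := mul_nonneg ha12 hb22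
    have hb02v : b02 = 0 := by linarith
    have hq3 : a11*b12 = 0 := by linarith
    have hq4 : a12*b22 = 0 := by linarith
    subst hb01v hb02v
    have hv : b11*b22 - b12*b21 = 1 := by linear_combination hdB
    obtain ⟨hb11p, hb22p⟩ := pos_of_det hb11 hb22 hb12 hb21 hv
    have hA01 : a01 = 0 := mzl hb11p hq1
    have hA12 : a12 = 0 := mzl hb22p hq4
    subst hA01 hA12
    have hA02p : 1 ≤ a02 := by
      rcases le_or_gt 1 a02 with h | h
      · exact h
      · have h0 : a02 = 0 := by omega
        rw [h0] at e02; simp at e02; omega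
    have hb21v : b21 = 0 := mzr hA02p hq2
    have hA11p : 1 ≤ a11 := by
      rcases le_or_gt 1 a11 with h | h
      · exact h
      · have h0 : a11 = 0 := by omega
        rw [h0] at e11; simp at e11; omega
    have hb12v : b12 = 0 := mzr hA11p hq3
    subst hb21v hb12v
    obtain ⟨hb11e, hb22e⟩ := mul_one_one hb11p hb22p (by linear_combination hv)
    subst hb11e hb22e
    right; unfold IsPermMat; simp only [Matrix.of_apply]; decide
  · -- case b = (1,0,1)
    exfalso
    have r0 : a00 + a02 = 1 := by linear_combination e00
    have r1 : a10 + a12 = 1 := by linear_combination e10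
    have r2 : a20 + a22 = 1 := by linear_combination e20
    have tri : (a00 = a10 ∧ a02 = a12) ∨ (a00 = a20 ∧ a02 = a22) ∨
        (a10 = a20 ∧ a12 = a22) := by omega
    rcases tri with ⟨h1, h2⟩ | ⟨h1, h2⟩ | ⟨h1, h2⟩
    · have hx : (a01 - a11) * b11 = 1 - n := by
        linear_combination e01 - e11 - b01*h1 - b21*h2
      have hy : (a01 - a11) * b12 = n := by
        linear_combination e02 - e12 - b02*h1 - b22*h2
      exact sign_contra hb11 hb12 (by rw [hx]; omega) (by rw [hy]; omega)
    · have hx : (a01 - a21) * b11 = -1 := by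
        linear_combination e01 - e21 - b01*h1 - b21*h2
      have hy : (a01 - a21) * b12 = 1 := by
        linear_combination e02 - e22 - b02*h1 - b22*h2
      exact sign_contra hb11 hb12 (by rw [hx]; omega) (by rw [hy]; omega)
    · have hx : (a11 - a21) * b11 = n - 2 := by
        linear_combination e11 - e21 - b01*h1 - b21*h2
      have hy : (a11 - a21) * b12 = 1 - n := by
        linear_combination e12 - e22 - b02*h1 - b22*h2
      exact sign_contra hb12 hb11 (by rw [hy]; omega) (by rw [hx]; omega)
  · -- case b = (1,1,0)
    exfalso
    have r0 : a00 + a01 = 1 := by linear_combination e00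
    have r1 : a10 + a11 = 1 := by linear_combination e10
    have r2 : a20 + a21 = 1 := by linear_combination e20
    have tri : (a00 = a10 ∧ a01 = a11) ∨ (a00 = a20 ∧ a01 = a21) ∨
        (a10 = a20 ∧ a11 = a21) := by omega
    rcases tri with ⟨h1, h2⟩ | ⟨h1, h2⟩ | ⟨h1, h2⟩
    · have hx : (a02 - a12) * b21 = 1 - n := by
        linear_combination e01 - e11 - b01*h1 - b11*h2
      have hy : (a02 - a12) * b22 = n := by
        linear_combination e02 - e12 - b02*h1 - b12*h2
      exact sign_contra hb21 hb22 (by rw [hx]; omega) (by rw [hy]; omega)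
    · have hx : (a02 - a22) * b21 = -1 := by
        linear_combination e01 - e21 - b01*h1 - b11*h2
      have hy : (a02 - a22) * b22 = 1 := by
        linear_combination e02 - e22 - b02*h1 - b12*h2
      exact sign_contra hb21 hb22 (by rw [hx]; omega) (by rw [hy]; omega)
    · have hx : (a12 - a22) * b21 = n - 2 := by
        linear_combination e11 - e21 - b01*h1 - b11*h2
      have hy : (a12 - a22) * b22 = 1 - n := by
        linear_combination e12 - e22 - b02*h1 - b12*h2
      exact sign_contra hb22 hb21 (by rw [hy]; omega) (by rw [hx]; omega)
  · -- case b = (1,1,1)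
    have r0 : a00 + a01 + a02 = 1 := by linear_combination e00
    have r1 : a10 + a11 + a12 = 1 := by linear_combination e10
    have r2 : a20 + a21 + a22 = 1 := by linear_combination e20
    have c0 : (a00 = 1 ∧ a01 = 0 ∧ a02 = 0) ∨ (a00 = 0 ∧ a01 = 1 ∧ a02 = 0) ∨
        (a00 = 0 ∧ a01 = 0 ∧ a02 = 1) := by omega
    have c1 : (a10 = 1 ∧ a11 = 0 ∧ a12 = 0) ∨ (a10 = 0 ∧ a11 = 1 ∧ a12 = 0) ∨
        (a10 = 0 ∧ a11 = 0 ∧ a12 = 1) := by omega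
    have c2 : (a20 = 1 ∧ a21 = 0 ∧ a22 = 0) ∨ (a20 = 0 ∧ a21 = 1 ∧ a22 = 0) ∨
        (a20 = 0 ∧ a21 = 0 ∧ a22 = 1) := by omega
    rcases c0 with ⟨u1, u2, u3⟩ | ⟨u1, u2, u3⟩ | ⟨u1, u2, u3⟩ <;>
      rcases c1 with ⟨v1, v2, v3⟩ | ⟨v1, v2, v3⟩ | ⟨v1, v2, v3⟩ <;>
        rcases c2 with ⟨w1, w2, w3⟩ | ⟨w1, w2, w3⟩ | ⟨w1, w2, w3⟩ <;>
          subst u1 <;> subst u2 <;> subst u3 <;> subst v1 <;> subst v2 <;>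
            subst v3 <;> subst w1 <;> subst w2 <;> subst w3 <;>
              first
                | exact absurd hdA (by decide)
                | (left; unfold IsPermMat; simp only [Matrix.of_apply]; decide)

/-- For `n ≥ 3` the matrix `M_n = [[1,0,n],[1,n−1,0],[1,1,n−1]]` lies in `SL(3,ℕ)`
and is undecomposable. -/
theorem Mn_undecomposable (n : ℕ) (hn : 3 ≤ n) :
    let M : Matrix (Fin 3) (Fin 3) ℤ :=
      !![1, 0, (n : ℤ); 1, (n : ℤ) - 1, 0; 1, 1, (n : ℤ) - 1]
    (∀ i j, 0 ≤ M i j) ∧ M.det = 1 ∧ ¬ IsPermMat M ∧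
      ∀ A B : Matrix (Fin 3) (Fin 3) ℤ, (∀ i j, 0 ≤ A i j) → (∀ i j, 0 ≤ B i j) →
        A.det = 1 → B.det = 1 → M = A * B → IsPermMat A ∨ IsPermMat B := by
  intro M
  have hn' : (3 : ℤ) ≤ (n : ℤ) := by exact_mod_cast hn
  refine ⟨?_, ?_, ?_, ?_⟩
  · intro i j
    fin_cases i <;> fin_cases j <;>
      simp [M, Matrix.vecHead, Matrix.vecTail] <;> omega
  · show (!![1, 0, (n : ℤ); 1, (n : ℤ) - 1, 0; 1, 1, (n : ℤ) - 1]).det = 1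
    rw [Matrix.det_fin_three]
    simp [Matrix.vecHead, Matrix.vecTail]
    ring
  · rintro ⟨σ, hσ⟩
    have h2 := hσ 0 2
    have hent : M 0 2 = (n : ℤ) := rfl
    rw [hent] at h2
    split_ifs at h2 <;> omega
  · intro A B hA hB hdA hdB hMul
    rw [Matrix.det_fin_three] at hdA hdB
    have me : ∀ i j, M i j = A i 0 * B 0 j + A i 1 * B 1 j + A i 2 * B 2 j := by
      intro i j
      have := congrFun (congrFun hMul i) j
      simpa [Matrix.mul_apply, Fin.sum_univ_three] using this
    rcases key (n : ℤ) (A 0 0) (A 0 1) (A 0 2) (A 1 0) (A 1 1) (A 1 2)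
        (A 2 0) (A 2 1) (A 2 2) (B 0 0) (B 0 1) (B 0 2) (B 1 0) (B 1 1)
        (B 1 2) (B 2 0) (B 2 1) (B 2 2) hn'
        (hA 0 0) (hA 0 1) (hA 0 2) (hA 1 0) (hA 1 1) (hA 1 2)
        (hA 2 0) (hA 2 1) (hA 2 2)
        (hB 0 0) (hB 0 1) (hB 0 2) (hB 1 0) (hB 1 1) (hB 1 2)
        (hB 2 0) (hB 2 1) (hB 2 2)
        (by linear_combination hdA) (by linear_combination hdB)
        (by rw [← me 0 0]; rfl) (by rw [← me 0 1]; rfl)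
        (by rw [← me 0 2]; rfl) (by rw [← me 1 0]; rfl)
        (by rw [← me 1 1]; rfl) (by rw [← me 1 2]; rfl)
        (by rw [← me 2 0]; rfl) (by rw [← me 2 1]; rfl)
        (by rw [← me 2 2]; rfl) with h | h
    · left; rw [Matrix.eta_fin_three A]; exact h
    · right; rw [Matrix.eta_fin_three B]; exact h
end

section
/- For every irrational x ∈ (0,1) and every integer n ≥ 1, min(Θ_{n−1}(x), Θ_n(x), Θ_{n+1}(x)) < 1/√(a_{n+1}² + 4), where a_{n+1} is the (n+1)-st continued fraction digit of x. -/
/-- The Gauss map `T_G(0) = 0`, `T_G(x) = {1/x}` for `x ≠ 0`. -/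
noncomputable def TG (x : ℝ) : ℝ := if x = 0 then 0 else Int.fract (1 / x)

/-- `cfA x n = a_{n+1}(x) = ⌊1 / T_G^n(x)⌋`, the continued fraction digits of `x`. -/
noncomputable def cfA (x : ℝ) (n : ℕ) : ℤ := ⌊1 / (TG^[n] x)⌋

/-- `cfP x (n+1) = p_n(x)` : numerators of the convergents, with the index shift
`cfP x 0 = p_{-1} = 1`, `cfP x 1 = p_0 = 0`, and `p_{n+1} = a_{n+1} p_n + p_{n-1}`. -/
noncomputable def cfP (x : ℝ) : ℕ → ℤ
  | 0 => 1
  | 1 => 0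
  | (n + 2) => cfA x n * cfP x (n + 1) + cfP x n

/-- `cfQ x (n+1) = q_n(x)` : denominators of the convergents, with the index shift
`cfQ x 0 = q_{-1} = 0`, `cfQ x 1 = q_0 = 1`, and `q_{n+1} = a_{n+1} q_n + q_{n-1}`. -/
noncomputable def cfQ (x : ℝ) : ℕ → ℤ
  | 0 => 0
  | 1 => 1
  | (n + 2) => cfA x n * cfQ x (n + 1) + cfQ x n

/-- The approximation coefficients `Θ_n(x) = q_n² · |x − p_n/q_n|`. -/
noncomputable def Theta (x : ℝ) (n : ℕ) : ℝ :=
  (cfQ x (n + 1) : ℝ) ^ 2 * |x - (cfP x (n + 1) : ℝ) / (cfQ x (n + 1) : ℝ)|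

section aux
variable {x : ℝ}

lemma V_prop (hx : x ∈ Set.Ioo (0 : ℝ) 1) (hirr : Irrational x) (m : ℕ) :
    TG^[m] x ∈ Set.Ioo (0 : ℝ) 1 ∧ Irrational (TG^[m] x) := by
  induction m with
  | zero => exact ⟨hx, hirr⟩
  | succ k ih =>
    obtain ⟨⟨h0, h1⟩, hir⟩ := ih
    rw [Function.iterate_succ_apply']
    set y := TG^[k] x with hy
    have hy0 : y ≠ 0 := ne_of_gt h0
    have htg : TG y = Int.fract (1 / y) := if_neg hy0
    have hinv : Irrational (1 / y) := by
      rw [one_div]; exact hir.inv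
    have hfr : Irrational (Int.fract (1 / y)) := by
      rw [Int.fract]; exact hinv.sub_intCast _
    have hfr0 : Int.fract (1 / y) ≠ 0 := by
      intro h; rw [h] at hfr; exact (Rat.not_irrational 0) (by simpa using hfr)
    refine ⟨⟨?_, ?_⟩, by rwa [htg]⟩
    · rw [htg]; exact lt_of_le_of_ne (Int.fract_nonneg _) (Ne.symm hfr0)
    · rw [htg]; exact Int.fract_lt_one _

lemma cfA_ge_one (hx : x ∈ Set.Ioo (0 : ℝ) 1) (hirr : Irrational x) (m : ℕ) :
    1 ≤ cfA x m := by
  obtain ⟨⟨h0, h1⟩, _⟩ := V_prop hx hirr m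
  have : (1 : ℝ) ≤ 1 / TG^[m] x := by
    rw [le_div_iff₀ h0]; linarith
  exact Int.le_floor.mpr (by exact_mod_cast this)

lemma V_rec (hx : x ∈ Set.Ioo (0 : ℝ) 1) (hirr : Irrational x) (m : ℕ) :
    TG^[m] x * ((cfA x m : ℝ) + TG^[m+1] x) = 1 := by
  obtain ⟨⟨h0, h1⟩, _⟩ := V_prop hx hirr m
  have hy0 : TG^[m] x ≠ 0 := ne_of_gt h0
  rw [Function.iterate_succ_apply', TG, if_neg hy0, Int.fract, cfA]
  field_simp
  ring

lemma Q_pos (hx : x ∈ Set.Ioo (0 : ℝ) 1) (hirr : Irrational x) (m : ℕ) :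
    1 ≤ cfQ x (m + 1) ∧ 0 ≤ cfQ x m ∧ cfQ x m ≤ cfQ x (m + 1) := by
  induction m with
  | zero => simp [cfQ]
  | succ k ih =>
    obtain ⟨h1, h0, hle⟩ := ih
    have ha := cfA_ge_one hx hirr k
    have hrec : cfQ x (k + 2) = cfA x k * cfQ x (k + 1) + cfQ x k := rfl
    refine ⟨?_, by linarith, ?_⟩ <;> nlinarith

lemma det_eq (x : ℝ) (m : ℕ) :
    cfP x (m + 1) * cfQ x m - cfP x m * cfQ x (m + 1) = (-1 : ℤ) ^ (m + 1) := by
  induction m with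
  | zero => simp [cfP, cfQ]
  | succ k ih =>
    have hp : cfP x (k + 2) = cfA x k * cfP x (k + 1) + cfP x k := rfl
    have hq : cfQ x (k + 2) = cfA x k * cfQ x (k + 1) + cfQ x k := rfl
    rw [hp, hq, pow_succ]
    ring_nf
    ring_nf at ih
    linarith [ih]
end aux

section aux2
variable {x : ℝ}

/-- `e_{m+1} = -V_m e_m` where `e_k = x q_k - p_k` (shifted indices). -/
lemma key_lin (hx : x ∈ Set.Ioo (0 : ℝ) 1) (hirr : Irrational x) (m : ℕ) :
    x * (cfQ x (m + 1) : ℝ) - (cfP x (m + 1) : ℝ)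
      = -(TG^[m] x) * (x * (cfQ x m : ℝ) - (cfP x m : ℝ)) := by
  induction m with
  | zero => simp [cfP, cfQ]
  | succ k ih =>
    have hp : cfP x (k + 2) = cfA x k * cfP x (k + 1) + cfP x k := rfl
    have hq : cfQ x (k + 2) = cfA x k * cfQ x (k + 1) + cfQ x k := rfl
    have hv := V_rec hx hirr k
    rw [hp, hq]
    push_cast
    linear_combination ((cfA x k : ℝ) + TG^[k+1] x) * ih - (x * (cfQ x k : ℝ) - (cfP x k : ℝ)) * hv
end aux2

section aux3
variable {x : ℝ}

lemma eps_pos (hx : x ∈ Set.Ioo (0 : ℝ) 1) (hirr : Irrational x) (m : ℕ) :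
    0 < (-1 : ℝ) ^ (m + 1) * (x * (cfQ x m : ℝ) - (cfP x m : ℝ)) := by
  induction m with
  | zero => simp [cfP, cfQ]
  | succ k ih =>
    have hk := key_lin hx hirr k
    obtain ⟨⟨h0, _⟩, _⟩ := V_prop hx hirr k
    have : (-1 : ℝ) ^ (k + 2) * (x * (cfQ x (k+1) : ℝ) - (cfP x (k+1) : ℝ))
        = TG^[k] x * ((-1 : ℝ) ^ (k + 1) * (x * (cfQ x k : ℝ) - (cfP x k : ℝ))) := by
      rw [hk]; ring
    rw [this]
    positivity

/-- `e_m (q_{m} + q_{m-1} V_m) = (-1)^{m+1}`. -/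
lemma e_mul_E (hx : x ∈ Set.Ioo (0 : ℝ) 1) (hirr : Irrational x) (m : ℕ) :
    (x * (cfQ x m : ℝ) - (cfP x m : ℝ)) * ((cfQ x (m+1) : ℝ) + (cfQ x m : ℝ) * TG^[m] x)
      = (-1 : ℝ) ^ (m + 1) := by
  have hk := key_lin hx hirr m
  have hd := det_eq x m
  have hd' : (cfP x (m + 1) : ℝ) * (cfQ x m : ℝ) - (cfP x m : ℝ) * (cfQ x (m + 1) : ℝ)
      = (-1 : ℝ) ^ (m + 1) := by exact_mod_cast congrArg (Int.cast : ℤ → ℝ) hd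
  linear_combination (cfQ x m : ℝ) * hk + hd'

lemma theta_eq (hx : x ∈ Set.Ioo (0 : ℝ) 1) (hirr : Irrational x) (m : ℕ) :
    Theta x m = (cfQ x (m+1) : ℝ) * ((-1 : ℝ) ^ (m + 2) * (x * (cfQ x (m+1) : ℝ) - (cfP x (m+1) : ℝ))) := by
  have hq1 : (1 : ℤ) ≤ cfQ x (m + 1) := (Q_pos hx hirr m).1
  have hQpos : (0 : ℝ) < (cfQ x (m+1) : ℝ) := by exact_mod_cast lt_of_lt_of_le zero_lt_one hq1
  have heps := eps_pos hx hirr (m + 1)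
  have habs : |x * (cfQ x (m+1) : ℝ) - (cfP x (m+1) : ℝ)|
      = (-1 : ℝ) ^ (m + 2) * (x * (cfQ x (m+1) : ℝ) - (cfP x (m+1) : ℝ)) := by
    rcases Nat.even_or_odd (m + 2) with he | ho
    · rw [he.neg_one_pow, one_mul]
      rw [he.neg_one_pow, one_mul] at heps
      exact abs_of_pos heps
    · rw [ho.neg_one_pow, neg_one_mul]
      rw [ho.neg_one_pow, neg_one_mul] at heps
      exact abs_of_neg (by linarith)
  have : x - (cfP x (m+1) : ℝ) / (cfQ x (m+1) : ℝ)
      = (x * (cfQ x (m+1) : ℝ) - (cfP x (m+1) : ℝ)) / (cfQ x (m+1) : ℝ) := by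
    field_simp
  rw [Theta, this, abs_div, abs_of_pos hQpos, habs]
  field_simp
end aux3

lemma Q_coprime (x : ℝ) (m : ℕ) : IsCoprime (cfQ x m) (cfQ x (m + 1)) := by
  have hd := det_eq x m
  have h1 : ((-1 : ℤ)) ^ (m + 1) * ((-1 : ℤ)) ^ (m + 1) = 1 := by
    rw [← pow_add]; exact Even.neg_one_pow ⟨m + 1, by ring⟩
  refine ⟨(-1) ^ (m + 1) * cfP x (m + 1), -((-1) ^ (m + 1) * cfP x m), ?_⟩
  calc (-1 : ℤ) ^ (m + 1) * cfP x (m + 1) * cfQ x m + -((-1) ^ (m + 1) * cfP x m) * cfQ x (m + 1)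
      = (-1 : ℤ) ^ (m + 1) * (cfP x (m + 1) * cfQ x m - cfP x m * cfQ x (m + 1)) := by ring
    _ = (-1 : ℤ) ^ (m + 1) * (-1 : ℤ) ^ (m + 1) := by rw [hd]
    _ = 1 := h1


set_option maxHeartbeats 1000000 in
/-- abstract arithmetic core: the three approximation inequalities force `Q² = q² + aqQ`. -/
lemma theta_arith (a t α q Q R : ℝ) (ha1 : 1 ≤ a) (hq1 : 1 ≤ q) (hqQ : q ≤ Q)
    (hα0 : 0 < α) (hR : R = a * Q + q) (ht2 : t ^ 2 = a ^ 2 + 4) (ht0 : 0 < t)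
    (h1 : Q + q * α ≤ t * q) (h2 : Q + q * α ≤ t * Q * α)
    (h3 : Q + q * α ≤ t * R * (1 - a * α)) :
    Q ^ 2 = q ^ 2 + a * q * Q := by
  have hQ1 : (1 : ℝ) ≤ Q := le_trans hq1 hqQ
  have hta : 2 ≤ t := by nlinarith [sq_nonneg (t - 2), sq_nonneg (a - 1)]
  have ha4 : (0 : ℝ) < a ^ 2 + 4 := by positivity
  -- Step A : Q^2 ≤ q^2 + a q Q
  have e2 : Q ≤ α * (t * Q - q) := by nlinarith [h2]
  have s1 : 0 < t * Q - q := by nlinarith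
  have e1 : q * α ≤ t * q - Q := by linarith
  have hprod : q * Q ≤ (t * q - Q) * (t * Q - q) := by
    nlinarith [mul_le_mul_of_nonneg_right e1 (le_of_lt s1),
      mul_le_mul_of_nonneg_left e2 (by positivity : (0:ℝ) ≤ q)]
  have hkeyA : (t * q - Q) * (t * Q - q) = (a ^ 2 + 4) * (q * Q) + q * Q - t * (q ^ 2 + Q ^ 2) := by
    linear_combination q * Q * ht2
  have s3 : t * (q ^ 2 + Q ^ 2) ≤ (a ^ 2 + 4) * (q * Q) := by linarith
  have s4 : (q ^ 2 + Q ^ 2) ^ 2 ≤ (a ^ 2 + 4) * (q * Q) ^ 2 := by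
    have hmul : (t * (q ^ 2 + Q ^ 2)) * (t * (q ^ 2 + Q ^ 2))
        ≤ ((a ^ 2 + 4) * (q * Q)) * ((a ^ 2 + 4) * (q * Q)) :=
      mul_self_le_mul_self (by positivity) s3
    have hsub : (t * (q ^ 2 + Q ^ 2)) * (t * (q ^ 2 + Q ^ 2))
        = (a ^ 2 + 4) * ((q ^ 2 + Q ^ 2) ^ 2) := by linear_combination (q ^ 2 + Q ^ 2) ^ 2 * ht2
    rw [hsub] at hmul
    have := (mul_le_mul_iff_right₀ ha4).mp
      (by linarith : (a^2+4) * ((q ^ 2 + Q ^ 2) ^ 2) ≤ (a^2+4) * ((a^2+4) * (q*Q)^2))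
    linarith
  have haqQ : (0 : ℝ) ≤ a * q * Q := by positivity
  have hs4' : (Q ^ 2 - q ^ 2) ^ 2 ≤ (a * q * Q) ^ 2 := by linarith [s4]
  have hX : 0 ≤ Q ^ 2 - q ^ 2 := by nlinarith [hqQ, hq1]
  have s5 : Q ^ 2 - q ^ 2 ≤ a * q * Q := by nlinarith [hs4', haqQ, hX]
  have hA : Q ^ 2 ≤ q ^ 2 + a * q * Q := by linarith
  -- Step B : q^2 + a q Q ≤ Q^2
  have hR1 : (1 : ℝ) ≤ R := by nlinarith
  have u2 : α * (t * a * R + q) ≤ t * R - Q := by nlinarith [h3]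
  have w1 : (0 : ℝ) < t * a * R + q := by positivity
  have u3 : Q * (t * a * R + q) ≤ (t * R - Q) * (t * Q - q) := by
    nlinarith [mul_le_mul_of_nonneg_right u2 (le_of_lt s1),
      mul_le_mul_of_nonneg_left e2 (le_of_lt w1)]
  have hkeyB : (t * R - Q) * (t * Q - q) - Q * (t * a * R + q)
      = (a ^ 2 + 4) * (R * Q) - t * (R ^ 2 + Q ^ 2) := by
    linear_combination R * Q * ht2 + t * R * hR
  have u4 : t * (R ^ 2 + Q ^ 2) ≤ (a ^ 2 + 4) * (R * Q) := by linarith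
  have u5 : (R ^ 2 + Q ^ 2) ^ 2 ≤ (a ^ 2 + 4) * (R * Q) ^ 2 := by
    have hmul : (t * (R ^ 2 + Q ^ 2)) * (t * (R ^ 2 + Q ^ 2))
        ≤ ((a ^ 2 + 4) * (R * Q)) * ((a ^ 2 + 4) * (R * Q)) :=
      mul_self_le_mul_self (by positivity) u4
    have hsub : (t * (R ^ 2 + Q ^ 2)) * (t * (R ^ 2 + Q ^ 2))
        = (a ^ 2 + 4) * ((R ^ 2 + Q ^ 2) ^ 2) := by linear_combination (R ^ 2 + Q ^ 2) ^ 2 * ht2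
    rw [hsub] at hmul
    have := (mul_le_mul_iff_right₀ ha4).mp
      (by linarith : (a^2+4) * ((R ^ 2 + Q ^ 2) ^ 2) ≤ (a^2+4) * ((a^2+4) * (R*Q)^2))
    linarith
  have haRQ : (0 : ℝ) ≤ a * R * Q := by positivity
  have hu5' : (R ^ 2 - Q ^ 2) ^ 2 ≤ (a * R * Q) ^ 2 := by linarith [u5]
  have hQR : Q ≤ R := by nlinarith
  have hY : 0 ≤ R ^ 2 - Q ^ 2 := by nlinarith [hQR, hQ1]
  have u6 : R ^ 2 - Q ^ 2 ≤ a * R * Q := by nlinarith [hu5', haRQ, hY]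
  have hRq : R ^ 2 - a * R * Q = a * q * Q + q ^ 2 := by linear_combination (R + q) * hR
  have hB : q ^ 2 + a * q * Q ≤ Q ^ 2 := by linarith
  linarith

/-- abstract step: `Θ ≥ 1/t` becomes `E ≤ t·c`. -/
lemma theta_step (t c ε E : ℝ) (ht0 : 0 < t) (heps : 0 < ε) (hE : ε * E = 1)
    (hc : 1 / t ≤ c * ε) : E ≤ t * c := by
  have h' : 1 ≤ c * ε * t := (div_le_iff₀ ht0).mp hc
  nlinarith [heps, hE, h']

set_option maxHeartbeats 1000000 in
/-- For every irrational `x ∈ (0,1)` and every `n ≥ 1`,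
`min(Θ_{n−1}, Θ_n, Θ_{n+1}) < 1/√(a_{n+1}² + 4)`. -/
theorem min_theta_lt (x : ℝ) (hx : x ∈ Set.Ioo (0 : ℝ) 1) (hirr : Irrational x)
    (n : ℕ) (hn : 1 ≤ n) :
    min (min (Theta x (n - 1)) (Theta x n)) (Theta x (n + 1))
      < 1 / Real.sqrt ((cfA x n : ℝ) ^ 2 + 4) := by
  obtain ⟨m, rfl⟩ : ∃ m, n = m + 1 := ⟨n - 1, (Nat.succ_pred_eq_of_pos hn).symm⟩
  by_contra hcon
  push_neg at hcon
  rw [le_min_iff, le_min_iff] at hcon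
  obtain ⟨⟨hc0, hc1⟩, hc2⟩ := hcon
  simp only [Nat.add_sub_cancel] at hc0
  obtain ⟨⟨hα0, hα1⟩, -⟩ := V_prop hx hirr (m + 1)
  have ha1 : 1 ≤ cfA x (m + 1) := cfA_ge_one hx hirr (m + 1)
  have hvrec := V_rec hx hirr (m + 1)
  have hqZ : 1 ≤ cfQ x (m + 1) := (Q_pos hx hirr m).1
  obtain ⟨hQZ, -, hqQZ⟩ := Q_pos hx hirr (m + 1)
  have hQZ' : 1 ≤ cfQ x (m + 2) := hQZ
  have hRrec : cfQ x (m + 3) = cfA x (m + 1) * cfQ x (m + 2) + cfQ x (m + 1) := rfl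
  have ht0 : 0 < Real.sqrt ((cfA x (m + 1) : ℝ) ^ 2 + 4) := Real.sqrt_pos.mpr (by positivity)
  have ht2 : Real.sqrt ((cfA x (m + 1) : ℝ) ^ 2 + 4) ^ 2 = (cfA x (m + 1) : ℝ) ^ 2 + 4 :=
    Real.sq_sqrt (by positivity)
  have heps : 0 < (-1 : ℝ) ^ (m + 2) * (x * (cfQ x (m + 1) : ℝ) - (cfP x (m + 1) : ℝ)) :=
    eps_pos hx hirr (m + 1)
  have hEE := e_mul_E hx hirr (m + 1)
  have hpow : ((-1 : ℝ)) ^ (m + 2) * ((-1 : ℝ)) ^ (m + 2) = 1 := by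
    rw [← pow_add]; exact Even.neg_one_pow ⟨m + 2, by ring⟩
  have hE : ((-1 : ℝ) ^ (m + 2) * (x * (cfQ x (m + 1) : ℝ) - (cfP x (m + 1) : ℝ)))
      * ((cfQ x (m + 2) : ℝ) + (cfQ x (m + 1) : ℝ) * TG^[m + 1] x) = 1 := by
    linear_combination ((-1 : ℝ)) ^ (m + 2) * hEE + hpow
  have hth0 : Theta x m = (cfQ x (m + 1) : ℝ)
      * ((-1 : ℝ) ^ (m + 2) * (x * (cfQ x (m + 1) : ℝ) - (cfP x (m + 1) : ℝ))) :=
    theta_eq hx hirr m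
  rw [hth0] at hc0
  have h1 := theta_step _ _ _ _ ht0 heps hE hc0
  have hk1 := key_lin hx hirr (m + 1)
  have hk2 := key_lin hx hirr (m + 2)
  have hth1 : Theta x (m + 1) = ((cfQ x (m + 2) : ℝ) * TG^[m + 1] x)
      * ((-1 : ℝ) ^ (m + 2) * (x * (cfQ x (m + 1) : ℝ) - (cfP x (m + 1) : ℝ))) := by
    rw [theta_eq hx hirr (m + 1)]
    linear_combination (cfQ x (m + 2) : ℝ) * (-1 : ℝ) ^ (m + 3) * hk1
  rw [hth1] at hc1
  have h2 := theta_step _ _ _ _ ht0 heps hE hc1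
  have hαα' : TG^[m + 1] x * TG^[m + 2] x
      = 1 - (cfA x (m + 1) : ℝ) * TG^[m + 1] x := by linear_combination hvrec
  have hth2 : Theta x (m + 2) = ((cfQ x (m + 3) : ℝ)
        * (1 - (cfA x (m + 1) : ℝ) * TG^[m + 1] x))
      * ((-1 : ℝ) ^ (m + 2) * (x * (cfQ x (m + 1) : ℝ) - (cfP x (m + 1) : ℝ))) := by
    rw [theta_eq hx hirr (m + 2)]
    linear_combination (cfQ x (m + 3) : ℝ) * (-1 : ℝ) ^ (m + 4) * hk2
      - (cfQ x (m + 3) : ℝ) * TG^[m + 2] x * (-1 : ℝ) ^ (m + 2) * hk1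
      + (cfQ x (m + 3) : ℝ) * (-1 : ℝ) ^ (m + 2)
        * (x * (cfQ x (m + 1) : ℝ) - (cfP x (m + 1) : ℝ)) * hαα'
  rw [hth2] at hc2
  have h3 := theta_step _ _ _ _ ht0 heps hE hc2
  have ha1' : (1 : ℝ) ≤ (cfA x (m + 1) : ℝ) := by exact_mod_cast ha1
  have hq1' : (1 : ℝ) ≤ (cfQ x (m + 1) : ℝ) := by exact_mod_cast hqZ
  have hqQ' : (cfQ x (m + 1) : ℝ) ≤ (cfQ x (m + 2) : ℝ) := by exact_mod_cast hqQZ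
  have hR' : (cfQ x (m + 3) : ℝ)
      = (cfA x (m + 1) : ℝ) * (cfQ x (m + 2) : ℝ) + (cfQ x (m + 1) : ℝ) := by
    rw [hRrec]; push_cast; ring
  have heq := theta_arith (cfA x (m + 1) : ℝ) (Real.sqrt ((cfA x (m + 1) : ℝ) ^ 2 + 4))
    (TG^[m + 1] x) (cfQ x (m + 1) : ℝ) (cfQ x (m + 2) : ℝ) (cfQ x (m + 3) : ℝ)
    ha1' hq1' hqQ' hα0 hR' ht2 ht0 h1 (by nlinarith [h2]) (by nlinarith [h3])
  have hZ : (cfQ x (m + 2)) ^ 2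
      = (cfQ x (m + 1)) ^ 2 + cfA x (m + 1) * cfQ x (m + 1) * cfQ x (m + 2) := by
    exact_mod_cast heq
  have hcop : IsCoprime (cfQ x (m + 1)) (cfQ x (m + 2)) := Q_coprime x (m + 1)
  have hdvd : cfQ x (m + 1) ∣ (cfQ x (m + 2)) ^ 2 :=
    ⟨cfQ x (m + 1) + cfA x (m + 1) * cfQ x (m + 2), by linear_combination hZ⟩
  have hu : IsUnit (cfQ x (m + 1)) := (hcop.pow_right (n := 2)).isUnit_of_dvd hdvd
  have hq1Z : cfQ x (m + 1) = 1 := by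
    rcases Int.isUnit_iff.mp hu with h | h
    · exact h
    · omega
  rw [hq1Z] at hZ
  have hQdvd : cfQ x (m + 2) ∣ 1 :=
    ⟨cfQ x (m + 2) - cfA x (m + 1), by linear_combination -hZ⟩
  have hQu : IsUnit (cfQ x (m + 2)) := isUnit_of_dvd_one hQdvd
  have hQ1Z : cfQ x (m + 2) = 1 := by
    rcases Int.isUnit_iff.mp hQu with h | h
    · exact h
    · omega
  rw [hQ1Z] at hZ
  omega
end

section
/- For every irrational x ∈ (0,1) and every integer n ≥ 1, max(Θ_{n−1}(x), Θ_n(x), Θ_{n+1}(x)) > 1/√(a_{n+1}² + 4). -/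
lemma core2 (a u S W : ℝ) (ha : 1 ≤ a) (hu : 0 < u) (hS0 : 0 ≤ S) (hW0 : 0 ≤ W)
    (hS1 : S < u) (hW1 : W < u)
    (key : 2*a^2*u*(S + (a^2+2)*W) ≤ (S + a^2*W)^2) : S = 0 ∧ W = 0 := by
  have ha2 : (0:ℝ) < a^2 := by positivity
  rcases eq_or_lt_of_le (by positivity : (0:ℝ) ≤ S + a^2*W) with h0 | h0
  · constructor <;> nlinarith
  · exfalso
    have hlt : S + a^2*W < (1+a^2)*u := by nlinarith
    have e1 : 0 ≤ u*S*(a^2-1) := by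
      apply mul_nonneg (mul_nonneg hu.le hS0); nlinarith
    have e2 : 0 ≤ u*W*(a^4+3*a^2) := by positivity
    nlinarith [mul_lt_mul_of_pos_left hlt h0, e1, e2]

lemma core (a t r c : ℝ) (ha : 1 ≤ a) (ht0 : 0 < t) (hat : a*t < 1)
    (hr0 : 0 < r) (hr1 : r ≤ 1) (hc0 : 0 < c) (hc : c^2*(a^2+4) = 1)
    (h1 : r ≤ c*(1+r*t)) (h2 : t ≤ c*(1+r*t)) (h3 : (1-a*t)*(a+r) ≤ c*(1+r*t))
    (hne : t ≠ r) : False := by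
  have ht1 : t < 1 := by nlinarith
  have hrt1 : r*t < 1 := by nlinarith
  have hD0 : (0:ℝ) < 1 + r*t := by positivity
  have hcD : 0 < c*(1+r*t) := by positivity
  have h3' : a*(1-r*t) ≤ c*(1+r*t) - r + a^2*t := by nlinarith [h3]
  have hp : 0 < a*(1-r*t) := by nlinarith
  have hsq : (a*(1-r*t))^2 ≤ (c*(1+r*t) - r + a^2*t)^2 := by nlinarith [h3', hp]
  have hz : a^2*(1+r*t)^2*(c^2*(a^2+4) - 1) = 0 := by rw [hc]; ring
  have key : 2*a^2*(c*(1+r*t))*((c*(1+r*t) - r) + (a^2+2)*(c*(1+r*t) - t))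
      ≤ ((c*(1+r*t) - r) + a^2*(c*(1+r*t) - t))^2 := by nlinarith [hsq, hz]
  obtain ⟨hSz, hWz⟩ := core2 a (c*(1+r*t)) (c*(1+r*t) - r) (c*(1+r*t) - t) ha hcD
    (by linarith) (by linarith) (by linarith) (by linarith) key
  exact hne (by linarith)

lemma TG_step {t : ℝ} (ht : t ∈ Set.Ioo (0:ℝ) 1) (hirr : Irrational t) :
    TG t ∈ Set.Ioo (0:ℝ) 1 ∧ Irrational (TG t) := by
  obtain ⟨ht0, ht1⟩ := ht
  have htne : t ≠ 0 := ne_of_gt ht0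
  have h1 : Irrational (1/t) := by rw [one_div]; exact hirr.inv
  have hTG : TG t = Int.fract (1/t) := if_neg htne
  have hirr' : Irrational (Int.fract (1/t)) := by
    have : Int.fract (1/t) = 1/t - (⌊1/t⌋ : ℤ) := rfl
    rw [this]; exact h1.sub_intCast _
  have hpos : 0 < Int.fract (1/t) := by
    rcases lt_or_eq_of_le (Int.fract_nonneg (1/t)) with h|h
    · exact h
    · exact absurd (h ▸ hirr') (by simp)
  refine ⟨?_, hTG ▸ hirr'⟩
  rw [hTG]
  exact ⟨hpos, Int.fract_lt_one _⟩

lemma iter_props {x : ℝ} (hx : x ∈ Set.Ioo (0:ℝ) 1) (hirr : Irrational x) (n : ℕ) :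
    TG^[n] x ∈ Set.Ioo (0:ℝ) 1 ∧ Irrational (TG^[n] x) := by
  induction n with
  | zero => exact ⟨hx, hirr⟩
  | succ n ih =>
    rw [Function.iterate_succ_apply']
    exact TG_step ih.1 ih.2

lemma cfA_one_le {x : ℝ} (hx : x ∈ Set.Ioo (0:ℝ) 1) (hirr : Irrational x) (n : ℕ) :
    1 ≤ cfA x n := by
  obtain ⟨⟨h0, h1⟩, _⟩ := iter_props hx hirr n
  have : (1:ℝ) < 1 / (TG^[n] x) := by
    rw [lt_div_iff₀ h0]; linarith
  exact Int.le_floor.mpr (by exact_mod_cast this.le)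

lemma cfA_lt {x : ℝ} (hx : x ∈ Set.Ioo (0:ℝ) 1) (hirr : Irrational x) (n : ℕ) :
    (cfA x n : ℝ) * (TG^[n] x) < 1 ∧ 1 < ((cfA x n : ℝ) + 1) * (TG^[n] x) := by
  obtain ⟨⟨h0, h1⟩, hi⟩ := iter_props hx hirr n
  have hfl : (cfA x n : ℝ) ≤ 1 / (TG^[n] x) := Int.floor_le _
  have hne : (cfA x n : ℝ) ≠ 1 / (TG^[n] x) := by
    intro h
    have : Irrational (1 / TG^[n] x) := by rw [one_div]; exact hi.inv
    exact (this.ne_int (cfA x n)) h.symm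
  have hlt : (cfA x n : ℝ) < 1 / (TG^[n] x) := lt_of_le_of_ne hfl hne
  have hlt2 : 1 / (TG^[n] x) < (cfA x n : ℝ) + 1 := by
    have := Int.lt_floor_add_one (1 / (TG^[n] x)); exact_mod_cast this
  constructor
  · calc (cfA x n : ℝ) * (TG^[n] x) < (1 / (TG^[n] x)) * (TG^[n] x) :=
        mul_lt_mul_of_pos_right hlt h0
      _ = 1 := by field_simp
  · calc (1:ℝ) = (1 / (TG^[n] x)) * (TG^[n] x) := by field_simp
      _ < ((cfA x n : ℝ) + 1) * (TG^[n] x) := mul_lt_mul_of_pos_right hlt2 h0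

lemma tg_rec {x : ℝ} (hx : x ∈ Set.Ioo (0:ℝ) 1) (hirr : Irrational x) (n : ℕ) :
    (TG^[n] x) * ((cfA x n : ℝ) + TG^[n+1] x) = 1 := by
  obtain ⟨⟨h0, h1⟩, _⟩ := iter_props hx hirr n
  have hne : TG^[n] x ≠ 0 := ne_of_gt h0
  rw [Function.iterate_succ_apply']
  have : TG (TG^[n] x) = Int.fract (1 / TG^[n] x) := if_neg hne
  rw [this]
  have hfr : Int.fract (1 / TG^[n] x) = 1 / TG^[n] x - (⌊1 / TG^[n] x⌋ : ℤ) := rfl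
  rw [hfr]
  show (TG^[n] x) * ((cfA x n : ℝ) + (1 / TG^[n] x - (cfA x n : ℝ))) = 1
  field_simp
  ring

lemma cfQ_pos {x : ℝ} (hx : x ∈ Set.Ioo (0:ℝ) 1) (hirr : Irrational x) (n : ℕ) :
    0 ≤ cfQ x n ∧ 1 ≤ cfQ x (n+1) ∧ cfQ x n ≤ cfQ x (n+1) := by
  induction n with
  | zero => simp [cfQ]
  | succ n ih =>
    obtain ⟨h0, h1, h2⟩ := ih
    have ha := cfA_one_le hx hirr n
    have hrec : cfQ x (n+2) = cfA x n * cfQ x (n+1) + cfQ x n := rfl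
    refine ⟨by linarith, ?_, ?_⟩ <;> rw [hrec] <;> nlinarith

lemma conv_id {x : ℝ} (hx : x ∈ Set.Ioo (0:ℝ) 1) (hirr : Irrational x) (n : ℕ) :
    x * ((cfQ x (n+1) : ℝ) + (cfQ x n : ℝ) * TG^[n] x)
      = (cfP x (n+1) : ℝ) + (cfP x n : ℝ) * TG^[n] x := by
  induction n with
  | zero => simp [cfP, cfQ]
  | succ n ih =>
    have ht := tg_rec hx hirr n
    have hP : (cfP x (n+2) : ℝ) = (cfA x n : ℝ) * cfP x (n+1) + cfP x n := by
      have : cfP x (n+2) = cfA x n * cfP x (n+1) + cfP x n := rfl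
      exact_mod_cast congrArg (Int.cast : ℤ → ℝ) this
    have hQ : (cfQ x (n+2) : ℝ) = (cfA x n : ℝ) * cfQ x (n+1) + cfQ x n := by
      have : cfQ x (n+2) = cfA x n * cfQ x (n+1) + cfQ x n := rfl
      exact_mod_cast congrArg (Int.cast : ℤ → ℝ) this
    rw [hP, hQ]
    linear_combination ((cfA x n : ℝ) + TG^[n+1] x) * ih
      + ((cfP x n : ℝ) - x * (cfQ x n : ℝ)) * ht

lemma det_id (x : ℝ) (n : ℕ) :
    cfP x n * cfQ x (n+1) - cfP x (n+1) * cfQ x n = (-1)^n := by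
  induction n with
  | zero => simp [cfP, cfQ]
  | succ n ih =>
    have hP : cfP x (n+2) = cfA x n * cfP x (n+1) + cfP x n := rfl
    have hQ : cfQ x (n+2) = cfA x n * cfQ x (n+1) + cfQ x n := rfl
    rw [hP, hQ]; ring_nf; ring_nf at ih; linarith [ih]

lemma key_eq {x : ℝ} (hx : x ∈ Set.Ioo (0:ℝ) 1) (hirr : Irrational x) (m : ℕ) :
    ((cfP x m : ℝ) - x * cfQ x m)
      * ((cfQ x (m+1) : ℝ) + (cfQ x m : ℝ) * TG^[m] x) = (-1)^m := by
  have hdet : (cfP x m : ℝ) * cfQ x (m+1) - (cfP x (m+1) : ℝ) * cfQ x m = (-1)^m := by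
    exact_mod_cast congrArg (Int.cast : ℤ → ℝ) (det_id x m)
  linear_combination (-(cfQ x m : ℝ)) * conv_id hx hirr m + hdet

lemma E_pos {x : ℝ} (hx : x ∈ Set.Ioo (0:ℝ) 1) (hirr : Irrational x) (m : ℕ) :
    0 < (cfQ x (m+1) : ℝ) + (cfQ x m : ℝ) * TG^[m] x := by
  obtain ⟨⟨ht0, _⟩, _⟩ := iter_props hx hirr m
  obtain ⟨h0, h1, _⟩ := cfQ_pos hx hirr m
  have h0' : (0:ℝ) ≤ (cfQ x m : ℝ) := by exact_mod_cast h0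
  have h1' : (1:ℝ) ≤ (cfQ x (m+1) : ℝ) := by exact_mod_cast h1
  nlinarith

lemma theta_abs (x : ℝ) (k : ℕ) (hQ : 0 < (cfQ x (k+1) : ℝ)) :
    Theta x k = (cfQ x (k+1) : ℝ) * |x * (cfQ x (k+1) : ℝ) - (cfP x (k+1) : ℝ)| := by
  unfold Theta
  rw [show x - (cfP x (k+1) : ℝ) / (cfQ x (k+1) : ℝ)
      = (x * (cfQ x (k+1) : ℝ) - (cfP x (k+1) : ℝ)) / (cfQ x (k+1) : ℝ) by
    field_simp]
  rw [abs_div, abs_of_pos hQ]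
  field_simp

lemma theta_cur {x : ℝ} (hx : x ∈ Set.Ioo (0:ℝ) 1) (hirr : Irrational x) (m : ℕ) :
    Theta x m * ((cfQ x (m+1) : ℝ) + (cfQ x m : ℝ) * TG^[m] x)
      = (cfQ x (m+1) : ℝ) * TG^[m] x := by
  obtain ⟨⟨ht0, _⟩, _⟩ := iter_props hx hirr m
  have hQ : (0:ℝ) < (cfQ x (m+1) : ℝ) := by
    exact_mod_cast lt_of_lt_of_le zero_lt_one (cfQ_pos hx hirr m).2.1
  have hE := E_pos hx hirr m
  have hkey := key_eq hx hirr m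
  have hconv := conv_id hx hirr m
  have hxQ : (x * (cfQ x (m+1) : ℝ) - (cfP x (m+1) : ℝ))
      * ((cfQ x (m+1) : ℝ) + (cfQ x m : ℝ) * TG^[m] x) = (-1)^m * TG^[m] x := by
    linear_combination ((cfQ x (m+1) : ℝ) + (cfQ x m : ℝ) * TG^[m] x) * hconv
      + (TG^[m] x) * hkey
  rw [theta_abs x m hQ]
  have habs : |x * (cfQ x (m+1) : ℝ) - (cfP x (m+1) : ℝ)|
      * ((cfQ x (m+1) : ℝ) + (cfQ x m : ℝ) * TG^[m] x) = TG^[m] x := by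
    rw [← abs_of_pos hE, ← abs_mul, hxQ, abs_mul]
    simp [abs_of_pos ht0]
  calc (cfQ x (m+1) : ℝ) * |x * (cfQ x (m+1) : ℝ) - (cfP x (m+1) : ℝ)|
      * ((cfQ x (m+1) : ℝ) + (cfQ x m : ℝ) * TG^[m] x)
      = (cfQ x (m+1) : ℝ) * (|x * (cfQ x (m+1) : ℝ) - (cfP x (m+1) : ℝ)|
        * ((cfQ x (m+1) : ℝ) + (cfQ x m : ℝ) * TG^[m] x)) := by ring
    _ = (cfQ x (m+1) : ℝ) * TG^[m] x := by rw [habs]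

lemma theta_prev {x : ℝ} (hx : x ∈ Set.Ioo (0:ℝ) 1) (hirr : Irrational x) (k : ℕ) :
    Theta x k * ((cfQ x (k+2) : ℝ) + (cfQ x (k+1) : ℝ) * TG^[k+1] x)
      = (cfQ x (k+1) : ℝ) := by
  have hQ : (0:ℝ) < (cfQ x (k+1) : ℝ) := by
    exact_mod_cast lt_of_lt_of_le zero_lt_one (cfQ_pos hx hirr k).2.1
  have hE := E_pos hx hirr (k+1)
  have hkey := key_eq hx hirr (k+1)
  rw [theta_abs x k hQ]
  have habs : |x * (cfQ x (k+1) : ℝ) - (cfP x (k+1) : ℝ)|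
      * ((cfQ x (k+2) : ℝ) + (cfQ x (k+1) : ℝ) * TG^[k+1] x) = 1 := by
    rw [← abs_of_pos hE, ← abs_mul]
    rw [show (x * (cfQ x (k+1) : ℝ) - (cfP x (k+1) : ℝ))
        * ((cfQ x (k+2) : ℝ) + (cfQ x (k+1) : ℝ) * TG^[k+1] x) = -(((cfP x (k+1) : ℝ) - x * cfQ x (k+1))
        * ((cfQ x (k+1+1) : ℝ) + (cfQ x (k+1) : ℝ) * TG^[k+1] x)) by ring, hkey]
    simp [abs_pow]
  calc (cfQ x (k+1) : ℝ) * |x * (cfQ x (k+1) : ℝ) - (cfP x (k+1) : ℝ)|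
      * ((cfQ x (k+2) : ℝ) + (cfQ x (k+1) : ℝ) * TG^[k+1] x)
      = (cfQ x (k+1) : ℝ) * (|x * (cfQ x (k+1) : ℝ) - (cfP x (k+1) : ℝ)|
        * ((cfQ x (k+2) : ℝ) + (cfQ x (k+1) : ℝ) * TG^[k+1] x)) := by ring
    _ = (cfQ x (k+1) : ℝ) := by rw [habs]; ring

/-- Tong's inequality: for every irrational `x ∈ (0,1)` and every `n ≥ 1`,
`max(Θ_{n−1}, Θ_n, Θ_{n+1}) > 1/√(a_{n+1}² + 4)`. -/
theorem max_theta_gt (x : ℝ) (hx : x ∈ Set.Ioo (0 : ℝ) 1) (hirr : Irrational x)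
    (n : ℕ) (hn : 1 ≤ n) :
    max (max (Theta x (n - 1)) (Theta x n)) (Theta x (n + 1))
      > 1 / Real.sqrt ((cfA x n : ℝ) ^ 2 + 4) := by
  obtain ⟨k, rfl⟩ : ∃ k, n = k + 1 := ⟨n - 1, (Nat.succ_pred_eq_of_pos hn).symm⟩
  set n := k + 1 with hn'
  have hn1 : n - 1 = k := rfl
  -- notation
  set t : ℝ := TG^[n] x with hts
  set t' : ℝ := TG^[n+1] x with hts'
  set A : ℝ := (cfA x n : ℝ) with hAs
  set Q₀ : ℝ := (cfQ x n : ℝ) with hQ₀s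
  set Q₁ : ℝ := (cfQ x (n+1) : ℝ) with hQ₁s
  set Q₂ : ℝ := (cfQ x (n+2) : ℝ) with hQ₂s
  set E : ℝ := Q₁ + Q₀ * t with hEs
  set E' : ℝ := Q₂ + Q₁ * t' with hE's
  obtain ⟨⟨ht0, ht1⟩, hti⟩ := iter_props hx hirr n
  have hA1 : (1:ℝ) ≤ A := by rw [hAs]; exact_mod_cast cfA_one_le hx hirr n
  obtain ⟨hAt, hAt2⟩ := cfA_lt hx hirr n
  have htrec : t * (A + t') = 1 := by
    have := tg_rec hx hirr n; exact this
  have hQ₀1 : (1:ℝ) ≤ Q₀ := by rw [hQ₀s]; exact_mod_cast (cfQ_pos hx hirr k).2.1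
  have hQ₀₁ : Q₀ ≤ Q₁ := by rw [hQ₀s, hQ₁s]; exact_mod_cast (cfQ_pos hx hirr n).2.2
  have hQ₁0 : (0:ℝ) < Q₁ := by linarith
  have hQ₂eq : Q₂ = A * Q₁ + Q₀ := by
    rw [hQ₂s, hQ₁s, hQ₀s, hAs]
    push_cast [show cfQ x (n+2) = cfA x n * cfQ x (n+1) + cfQ x n from rfl]
    ring

  have hE0 : 0 < E := E_pos hx hirr n
  have hE'0 : 0 < E' := E_pos hx hirr (n+1)
  have hEE' : E' * t = E := by
    rw [hEs, hE's, hQ₂eq]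
    linear_combination Q₁ * htrec
  -- theta formulas
  have ThN : Theta x n * E = Q₁ * t := theta_cur hx hirr n
  have ThP : Theta x (n-1) * E = Q₀ := by
    rw [hn1]
    exact theta_prev hx hirr k
  have ThF : Theta x (n+1) * E' = Q₂ * t' := theta_cur hx hirr (n+1)
  -- the constant
  set c : ℝ := 1 / Real.sqrt (A^2 + 4) with hcs
  have hsq4 : (0:ℝ) < A^2 + 4 := by positivity
  have hsqrt0 : 0 < Real.sqrt (A^2+4) := Real.sqrt_pos.mpr hsq4
  have hc0 : 0 < c := by positivity
  have hc : c^2 * (A^2+4) = 1 := by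
    rw [hcs, div_pow, one_pow, Real.sq_sqrt hsq4.le]
    field_simp
  by_contra hcon
  push_neg at hcon
  obtain ⟨h12, h3⟩ := max_le_iff.mp hcon
  obtain ⟨h1, h2⟩ := max_le_iff.mp h12
  have hh1 : Q₀ ≤ c * E := by
    calc Q₀ = Theta x (n-1) * E := ThP.symm
      _ ≤ c * E := mul_le_mul_of_nonneg_right h1 hE0.le
  have hh2 : Q₁ * t ≤ c * E := by
    calc Q₁ * t = Theta x n * E := ThN.symm
      _ ≤ c * E := mul_le_mul_of_nonneg_right h2 hE0.le
  have hh3 : Q₂ * t' ≤ c * E' := by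
    calc Q₂ * t' = Theta x (n+1) * E' := ThF.symm
      _ ≤ c * E' := mul_le_mul_of_nonneg_right h3 hE'0.le
  -- reduce to core
  set r : ℝ := Q₀ / Q₁ with hrs
  have hr0 : 0 < r := by positivity
  have hr1 : r ≤ 1 := (div_le_one hQ₁0).mpr hQ₀₁
  have e1 : r * Q₁ = Q₀ := by rw [hrs]; field_simp
  have e2 : (1 + r * t) * Q₁ = E := by rw [hrs, hEs]; field_simp
  have htt' : t * t' = 1 - A * t := by linear_combination htrec
  have hr' : (A + r) * Q₁ = A * Q₁ + Q₀ := by rw [hrs]; field_simp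
  have H1 : r ≤ c * (1 + r * t) := by
    rw [← mul_le_mul_iff_of_pos_right hQ₁0, e1]
    calc Q₀ ≤ c * E := hh1
      _ = c * ((1 + r * t) * Q₁) := by rw [e2]
      _ = c * (1 + r * t) * Q₁ := by ring
  have H2 : t ≤ c * (1 + r * t) := by
    rw [← mul_le_mul_iff_of_pos_right hQ₁0]
    calc t * Q₁ = Q₁ * t := by ring
      _ ≤ c * E := hh2
      _ = c * ((1 + r * t) * Q₁) := by rw [e2]
      _ = c * (1 + r * t) * Q₁ := by ring
  have H3 : (1 - A*t) * (A + r) ≤ c * (1 + r * t) := by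
    rw [← mul_le_mul_iff_of_pos_right hQ₁0]
    calc (1 - A*t) * (A + r) * Q₁ = (1 - A*t) * ((A + r) * Q₁) := by ring
      _ = (1 - A*t) * (A * Q₁ + Q₀) := by rw [hr']
      _ = (t * t') * Q₂ := by rw [htt', hQ₂eq]
      _ = t * (Q₂ * t') := by ring
      _ ≤ t * (c * E') := mul_le_mul_of_nonneg_left hh3 ht0.le
      _ = c * (E' * t) := by ring
      _ = c * E := by rw [hEE']
      _ = c * ((1 + r * t) * Q₁) := by rw [e2]
      _ = c * (1 + r * t) * Q₁ := by ring
  have hne : t ≠ r := by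
    intro h
    refine hti ⟨(cfQ x n : ℚ) / (cfQ x (n+1) : ℚ), ?_⟩
    push_cast
    rw [← hQ₀s, ← hQ₁s, ← hrs, ← h]
  exact core A t r c hA1 ht0 hAt hr0 hr1 hc0 hc H1 H2 H3 hne
end

section
/- For every t > 0, the lattice Λ_t generated by the columns of M_t (identity in the top-left d×d block, last column (−α₁,…,−α_d,t)ᵀ, last row (0,…,0,t)) contains a nonzero vector x with ||x||₂ ≤ √((d+1)(d+5)/4) · t^{1/(d+1)}. -/
open MeasureTheory Submodule Matrix in
/-- Minkowski short vector in the lattice `Λ_t` generated by the columns of `M_t`: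
for every `t > 0` there is a nonzero lattice vector
`x = (p₁ − qα₁, …, p_d − qα_d, qt)` with `‖x‖₂ ≤ √((d+1)(d+5)/4)·t^{1/(d+1)}`. -/
theorem minkowski_short_vector (d : ℕ) (α : Fin d → ℝ) (t : ℝ) (ht : 0 < t) :
    ∃ (p : Fin d → ℤ) (q : ℤ),
      (Fin.snoc (fun i => (p i : ℝ) - (q : ℝ) * α i) ((q : ℝ) * t) : Fin (d + 1) → ℝ) ≠ 0 ∧
      Real.sqrt (∑ i : Fin (d + 1),
          ((Fin.snoc (fun i => (p i : ℝ) - (q : ℝ) * α i) ((q : ℝ) * t) : Fin (d + 1) → ℝ) i) ^ 2)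
        ≤ Real.sqrt (((d : ℝ) + 1) * ((d : ℝ) + 5) / 4) * t ^ (1 / ((d : ℝ) + 1)) := by
  classical
  set X := t ^ (1 / ((d : ℝ) + 1)) with hXdef
  have hX0 : 0 < X := Real.rpow_pos_of_pos ht _
  have hXpow : X ^ (d + 1) = t := by
    rw [hXdef, show (1 / ((d:ℝ)+1)) = ((d+1 : ℕ) : ℝ)⁻¹ by push_cast; ring]
    exact Real.rpow_inv_natCast_pow ht.le (Nat.succ_ne_zero d)
  set r : ℝ := Real.sqrt (((d:ℝ)+5)/4) * X with hrdef
  have hc1 : (1:ℝ) < Real.sqrt (((d:ℝ)+5)/4) := by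
    rw [show (1:ℝ) = Real.sqrt 1 by simp]
    apply Real.sqrt_lt_sqrt (by norm_num)
    have : (0:ℝ) ≤ (d:ℝ) := Nat.cast_nonneg d
    linarith
  have hXr : X < r := by
    nlinarith
  have hr0 : 0 < r := hX0.trans hXr
  set M : Matrix (Fin (d+1)) (Fin (d+1)) ℝ :=
    Matrix.updateCol 1 (Fin.last d) (Fin.snoc (fun i => -α i) t) with hM
  have hdet : M.det = t := by
    rw [hM, ← Matrix.cramer_apply, Matrix.cramer_one]
    simp
  have hinv : Invertible M := M.invertibleOfIsUnitDet (by rw [hdet]; exact ht.ne'.isUnit)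
  set b : Module.Basis (Fin (d+1)) ℝ (Fin (d+1) → ℝ) :=
    (Pi.basisFun ℝ (Fin (d+1))).map (M.toLinearEquiv' hinv) with hb
  have hbcol : ∀ j, b j = fun i => M i j := by
    intro j
    rw [hb]
    ext i
    simp [Matrix.toLinearEquiv', Matrix.mulVec_single]
  -- volume of the fundamental domain
  have hvol : volume (ZSpan.fundamentalDomain b) = ENNReal.ofReal t := by
    rw [ZSpan.volume_fundamentalDomain]
    congr 1
    rw [show Matrix.of ⇑b = Mᵀ from by ext i j; exact congrFun (hbcol i) j,
      Matrix.det_transpose, hdet, abs_of_pos ht]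
  -- the convex body
  set s : Set (Fin (d+1) → ℝ) := Set.pi Set.univ (fun _ => Set.Icc (-r) r) with hs
  have hs_symm : ∀ x ∈ s, -x ∈ s := by
    intro x hx i _
    have := hx i (Set.mem_univ i)
    simp only [Set.mem_Icc] at this ⊢
    constructor <;> simp <;> linarith [this.1, this.2]
  have hs_conv : Convex ℝ s := convex_pi (fun i _ => convex_Icc _ _)
  have hs_vol : volume s = ENNReal.ofReal ((2*r) ^ (d+1)) := by
    rw [hs, volume_pi_pi]
    simp only [Real.volume_Icc, sub_neg_eq_add]
    rw [Finset.prod_const, Finset.card_univ, Fintype.card_fin,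
      ← ENNReal.ofReal_pow (by linarith)]
    congr 1
    ring_nf
  have hlt : volume (ZSpan.fundamentalDomain b) * 2 ^ (Module.finrank ℝ (Fin (d+1) → ℝ))
      < volume s := by
    rw [hvol, hs_vol, Module.finrank_fintype_fun_eq_card, Fintype.card_fin]
    calc ENNReal.ofReal t * 2 ^ (d+1) = ENNReal.ofReal (t * 2^(d+1)) := by
          rw [ENNReal.ofReal_mul ht.le]
          congr 1
          rw [ENNReal.ofReal_pow (by norm_num : (0:ℝ) ≤ 2), ENNReal.ofReal_ofNat]
      _ < ENNReal.ofReal ((2*r)^(d+1)) := by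
          apply ENNReal.ofReal_lt_ofReal_iff_of_nonneg (by positivity) |>.mpr
          rw [mul_pow, ← hXpow]
          have : X ^ (d+1) < r ^ (d+1) := pow_lt_pow_left₀ hXr hX0.le (Nat.succ_ne_zero d)
          nlinarith [pow_pos hX0 (d+1), pow_pos hr0 (d+1), pow_pos (show (0:ℝ)<2 by norm_num) (d+1)]
  have hfund := ZSpan.isAddFundamentalDomain' b volume
  have : Countable (span ℤ (Set.range ⇑b)).toAddSubgroup := by
    change Countable (span ℤ (Set.range ⇑b))
    infer_instance
  obtain ⟨⟨x, hx⟩, h_nz, h_mem⟩ :=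
    exists_ne_zero_mem_lattice_of_measure_mul_two_pow_lt_measure hfund hs_symm hs_conv hlt
  rw [Submodule.mem_toAddSubgroup, mem_span_range_iff_exists_fun] at hx
  obtain ⟨c, hc⟩ := hx
  have hMc : ∀ (i : Fin (d+1)) (j : Fin d), M i (Fin.castSucc j)
      = if i = Fin.castSucc j then (1:ℝ) else 0 := by
    intro i j
    rw [hM, Matrix.updateCol_apply, if_neg (Fin.castSucc_lt_last j).ne, Matrix.one_apply]
  have hMl : ∀ i, M i (Fin.last d) = (Fin.snoc (fun i => -α i) t : Fin (d+1) → ℝ) i := by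
    intro i
    rw [hM, Matrix.updateCol_apply, if_pos rfl]
  have hxeq : (Fin.snoc (fun i => ((c (Fin.castSucc i) : ℤ) : ℝ)
      - ((c (Fin.last d) : ℤ) : ℝ) * α i) (((c (Fin.last d) : ℤ) : ℝ) * t) : Fin (d+1) → ℝ)
      = x := by
    rw [← hc]
    funext i
    rw [Finset.sum_apply]
    have hterm : ∀ j, (c j • b j) i = (c j : ℝ) * M i j := by
      intro j; rw [hbcol j]; simp
    simp_rw [hterm]
    rw [Fin.sum_univ_castSucc]
    refine Fin.lastCases ?_ ?_ i
    · rw [Fin.snoc_last, hMl (Fin.last d), Fin.snoc_last]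
      have h0 : ∀ j : Fin d, (c (Fin.castSucc j) : ℝ) * M (Fin.last d) (Fin.castSucc j) = 0 := by
        intro j
        rw [hMc, if_neg (Fin.castSucc_lt_last j).ne', mul_zero]
      rw [Finset.sum_congr rfl (fun j _ => h0 j), Finset.sum_const, smul_zero, zero_add]
    · intro i0
      rw [Fin.snoc_castSucc, hMl (Fin.castSucc i0), Fin.snoc_castSucc]
      have h0 : ∀ j : Fin d, (c (Fin.castSucc j) : ℝ) * M (Fin.castSucc i0) (Fin.castSucc j)
          = if j = i0 then (c (Fin.castSucc j) : ℝ) else 0 := by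
        intro j
        rw [hMc]
        by_cases h : j = i0
        · simp [h]
        · rw [if_neg (fun he => h (Fin.castSucc_injective d he).symm), if_neg h, mul_zero]
      rw [Finset.sum_congr rfl (fun j _ => h0 j), Finset.sum_ite_eq' Finset.univ i0]
      simp only [Finset.mem_univ, if_true]
      ring
  refine ⟨fun i => c (Fin.castSucc i), c (Fin.last d), ?_, ?_⟩
  · rw [hxeq]
    intro h0
    exact h_nz (Subtype.ext h0)
  · rw [hxeq]
    have hbd : ∀ i, (x i) ^ 2 ≤ r ^ 2 := by
      intro i
      have hmi := h_mem i (Set.mem_univ i)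
      simp only [Set.mem_Icc] at hmi
      exact sq_le_sq' hmi.1 hmi.2
    have hsum : ∑ i, (x i) ^ 2 ≤ ((d:ℝ)+1) * r ^ 2 := by
      calc ∑ i, (x i) ^ 2 ≤ ∑ _i : Fin (d+1), r ^ 2 :=
            Finset.sum_le_sum (fun i _ => hbd i)
        _ = ((d:ℝ)+1) * r ^ 2 := by
            rw [Finset.sum_const, Finset.card_univ, Fintype.card_fin, nsmul_eq_mul]
            push_cast; ring
    refine le_trans (Real.sqrt_le_sqrt hsum) (le_of_eq ?_)
    rw [Real.sqrt_mul (by positivity), Real.sqrt_sq hr0.le, hrdef, ← mul_assoc,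
      ← Real.sqrt_mul (by positivity)]
    congr 2
    ring
end

section
/- For d = 2, the cylinder set C_{a,b} of the nearest integer Jacobi–Perron map is nonempty if and only if |a| ≥ 2 and 0 ≤ |b| ≤ ⌈|a|/2⌉. -/
/-!
Writing `r = 1/x₁` and `s = x₂/x₁`, the map `x ↦ (r, s)` is a bijection from the points of
`[-1/2,1/2]²` with `x₁ ≠ 0` onto the region `2 ≤ |r|`, `2|s| ≤ |r|`, and the digits are
`a = round r`, `b = round s`. Since rounding moves a real by at most `1/2`, the digits of a
point of that region satisfy `|a| ≥ 3/2` and `2|b| ≤ |a| + 3/2`, i.e. `2 ≤ |a|` and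
`2|b| ≤ |a| + 1`. Conversely, for such digits the point `r = a (1 + 1/(4|a|))`,
`s = b (|a| + 1/4)/(|a| + 1)` lies in the region and rounds to `(a, b)`.
-/

theorem Int.le_ceil_div_two_iff (m n : ℤ) : n ≤ ⌈(m : ℝ) / 2⌉ ↔ 2 * n ≤ m + 1 := by
  rw [Int.le_ceil_iff]
  constructor
  · intro h
    have : 2 * n - 2 < m := by exact_mod_cast (by linarith : (2 * n : ℝ) - 2 < m)
    omega
  · intro h
    have : (2 * n : ℝ) ≤ m + 1 := by exact_mod_cast h
    linarith

theorem round_eq_of_abs_sub_lt {x : ℝ} {n : ℤ} (h : |x - n| < 1 / 2) : round x = n := by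
  rw [round_eq_iff]
  obtain ⟨h₁, h₂⟩ := abs_sub_lt_iff.mp h
  exact ⟨by linarith, by linarith⟩

theorem exists_mem_square_iff_exists_ratio (P : ℝ → ℝ → Prop) :
    (∃ x : ℝ × ℝ, x.1 ∈ Set.Icc (-(1/2) : ℝ) (1/2) ∧ x.2 ∈ Set.Icc (-(1/2) : ℝ) (1/2) ∧
        x.1 ≠ 0 ∧ P (1 / x.1) (x.2 / x.1)) ↔
      ∃ r s : ℝ, 2 ≤ |r| ∧ 2 * |s| ≤ |r| ∧ P r s := by
  simp only [Set.mem_Icc, ← abs_le]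
  constructor
  · rintro ⟨⟨x₁, x₂⟩, hx₁, hx₂, hne, hP⟩
    have hpos : 0 < |x₁| := abs_pos.mpr hne
    refine ⟨1 / x₁, x₂ / x₁, ?_, ?_, hP⟩
    · rw [abs_div, abs_one, le_div_iff₀ hpos]
      linarith
    · rw [abs_div, abs_div, abs_one, ← mul_div_assoc]
      gcongr
      linarith
  · rintro ⟨r, s, hr, hs, hP⟩
    have hpos : 0 < |r| := by linarith
    refine ⟨(1 / r, s / r), ?_, ?_, one_div_ne_zero (abs_pos.mp hpos), ?_⟩
    · rw [abs_div, abs_one, div_le_iff₀ hpos]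
      linarith
    · rw [abs_div, div_le_iff₀ hpos]
      linarith
    · have hr0 : r ≠ 0 := abs_pos.mp hpos
      have hsr : s / r / (1 / r) = s := by field_simp
      simpa only [one_div_one_div, hsr] using hP

theorem two_le_abs_round_and_two_mul_abs_round_le {r s : ℝ} (hr : 2 ≤ |r|) (hs : 2 * |s| ≤ |r|) :
    2 ≤ |round r| ∧ 2 * |round s| ≤ |round r| + 1 := by
  have hrr := abs_sub_round r
  have hss := abs_sub_round s
  have ha : (1 : ℝ) < |(round r : ℝ)| := by
    linarith [abs_sub_abs_le_abs_sub r (round r)]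
  have hb : 2 * |(round s : ℝ)| < |(round r : ℝ)| + 2 := by
    linarith [abs_sub_abs_le_abs_sub (round s : ℝ) s, abs_sub_comm (round s : ℝ) s,
      abs_sub_abs_le_abs_sub r (round r)]
  norm_cast at ha hb
  omega

theorem exists_round_eq_of_two_le_abs {a b : ℤ} (ha : 2 ≤ |a|) (hb : 2 * |b| ≤ |a| + 1) :
    ∃ r s : ℝ, 2 ≤ |r| ∧ 2 * |s| ≤ |r| ∧ round r = a ∧ round s = b := by
  obtain ⟨A, hA_def⟩ : ∃ A : ℝ, |(a : ℝ)| = A := ⟨_, rfl⟩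
  obtain ⟨B, hB_def⟩ : ∃ B : ℝ, |(b : ℝ)| = B := ⟨_, rfl⟩
  have hA : 2 ≤ A := by rw [← hA_def, ← Int.cast_abs]; exact_mod_cast ha
  have hB : 2 * B ≤ A + 1 := by
    rw [← hA_def, ← hB_def, ← Int.cast_abs, ← Int.cast_abs]; exact_mod_cast hb
  have hA0 : 0 < A := by linarith
  have hB0 : 0 ≤ B := hB_def ▸ abs_nonneg _
  have hr : |a * (1 + 1 / (4 * A))| = A + 1 / 4 := by
    rw [abs_mul, hA_def, abs_of_pos (by positivity)]
    field_simp
  have hs : |b * ((A + 1 / 4) / (A + 1))| = B * ((A + 1 / 4) / (A + 1)) := by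
    rw [abs_mul, hB_def, abs_of_pos (by positivity)]
  refine ⟨a * (1 + 1 / (4 * A)), b * ((A + 1 / 4) / (A + 1)), ?_, ?_, ?_, ?_⟩
  · rw [hr]; linarith
  · rw [hr, hs]
    calc 2 * (B * ((A + 1 / 4) / (A + 1))) = 2 * B / (A + 1) * (A + 1 / 4) := by ring
      _ ≤ 1 * (A + 1 / 4) := by
        gcongr
        exact (div_le_one (by positivity)).mpr hB
      _ = A + 1 / 4 := one_mul _
  · apply round_eq_of_abs_sub_lt
    rw [show a * (1 + 1 / (4 * A)) - a = a / (4 * A) by ring, abs_div, hA_def,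
      abs_of_pos (by positivity : 0 < 4 * A)]
    field_simp
    norm_num
  · apply round_eq_of_abs_sub_lt
    rw [show b * ((A + 1 / 4) / (A + 1)) - b = -(b * (3 / 4) / (A + 1)) by field_simp; ring,
      abs_neg, abs_div, abs_mul, hB_def, abs_of_pos (by positivity : 0 < A + 1),
      div_lt_iff₀ (by positivity)]
    norm_num
    linarith

/-- For the 2-dimensional nearest integer Jacobi–Perron map on `C = [−1/2,1/2]²`,
with digits `a(x) = ⌊1/x₁ + 1/2⌋` and `b(x) = ⌊x₂/x₁ + 1/2⌋`, the cylinder set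
`C_{a,b}` is nonempty if and only if `|a| ≥ 2` and `0 ≤ |b| ≤ ⌈|a|/2⌉`. -/
theorem nijp_cylinder_nonempty (a b : ℤ) :
    (∃ x : ℝ × ℝ, x.1 ∈ Set.Icc (-(1/2) : ℝ) (1/2) ∧ x.2 ∈ Set.Icc (-(1/2) : ℝ) (1/2) ∧
        x.1 ≠ 0 ∧ ⌊1 / x.1 + 1/2⌋ = a ∧ ⌊x.2 / x.1 + 1/2⌋ = b)
      ↔ (2 ≤ |a| ∧ 0 ≤ |b| ∧ |b| ≤ ⌈(|a| : ℝ) / 2⌉) := by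
  simp only [← round_eq, exists_mem_square_iff_exists_ratio (fun r s => round r = a ∧ round s = b),
    ← Int.cast_abs, Int.le_ceil_div_two_iff, abs_nonneg, true_and]
  constructor
  · rintro ⟨r, s, hr, hs, rfl, rfl⟩
    exact two_le_abs_round_and_two_mul_abs_round_le hr hs
  · rintro ⟨ha, hb⟩
    exact exists_round_eq_of_two_le_abs ha hb
end

section
/- For the 2-dimensional nearest integer Jacobi–Perron map T₀, the image under T₀ of the set C_{2,0} ∩ H₁, where H₁ = {(x₁,x₂) : x₂ ≥ 0, x₂ ≤ 1 − 2x₁, x₁ ≥ 2/5} ∩ C_{2,0}, equals (up to sets of Lebesgue measure zero) the union E₁ ∪ F₁ ∪ G₁ = {(x₁,x₂) ∈ [0,1/2]² : x₂ ≥ x₁}, i.e., the triangle with vertices (0,0), (0,1/2), (1/2,1/2). -/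
/-- The 2-dimensional nearest integer Jacobi–Perron map. -/
noncomputable def T0 (x : ℝ × ℝ) : ℝ × ℝ :=
  (x.2 / x.1 - ⌊x.2 / x.1 + 1/2⌋, 1 / x.1 - ⌊1 / x.1 + 1/2⌋)

/-- The image under `T₀` of `C_{2,0} ∩ H₁` (where `H₁` is the triangle bounded by
`x₂ = 0`, `x₁ = 2/5` and `x₂ = 1 − 2x₁`) equals, up to a set of Lebesgue measure
zero, the triangle `E₁ ∪ F₁ ∪ G₁ = {(x₁,x₂) ∈ [0,1/2]² : x₂ ≥ x₁}`. -/
theorem nijp_image_C20_H1 :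
    MeasureTheory.volume
      (symmDiff
        (T0 '' {x : ℝ × ℝ | x.1 ∈ Set.Icc (-(1/2) : ℝ) (1/2) ∧
            x.2 ∈ Set.Icc (-(1/2) : ℝ) (1/2) ∧ x.1 ≠ 0 ∧
            ⌊1 / x.1 + 1/2⌋ = (2 : ℤ) ∧ ⌊x.2 / x.1 + 1/2⌋ = (0 : ℤ) ∧
            0 ≤ x.2 ∧ x.2 ≤ 1 - 2 * x.1 ∧ 2/5 ≤ x.1})
        {y : ℝ × ℝ | y.1 ∈ Set.Icc (0 : ℝ) (1/2) ∧ y.2 ∈ Set.Icc (0 : ℝ) (1/2) ∧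
          y.1 ≤ y.2}) = 0 := by
  set S : Set (ℝ × ℝ) := {x : ℝ × ℝ | x.1 ∈ Set.Icc (-(1/2) : ℝ) (1/2) ∧
      x.2 ∈ Set.Icc (-(1/2) : ℝ) (1/2) ∧ x.1 ≠ 0 ∧
      ⌊1 / x.1 + 1/2⌋ = (2 : ℤ) ∧ ⌊x.2 / x.1 + 1/2⌋ = (0 : ℤ) ∧
      0 ≤ x.2 ∧ x.2 ≤ 1 - 2 * x.1 ∧ 2/5 ≤ x.1} with hS
  set T : Set (ℝ × ℝ) := {y : ℝ × ℝ | y.1 ∈ Set.Icc (0 : ℝ) (1/2) ∧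
      y.2 ∈ Set.Icc (0 : ℝ) (1/2) ∧ y.1 ≤ y.2} with hT
  -- step 1 : image ⊆ T
  have hAB : T0 '' S ⊆ T := by
    rintro y ⟨x, hx, rfl⟩
    obtain ⟨⟨hx1l, hx1u⟩, ⟨hx2l, hx2u⟩, hne, hf1, hf2, h0, h1, h2⟩ := hx
    have hx1pos : (0 : ℝ) < x.1 := lt_of_lt_of_le (by norm_num) h2
    have hfl := Int.floor_eq_iff.mp hf1
    have hinv_lt : 1 / x.1 < 5/2 := by
      have := hfl.2; push_cast at this; linarith
    have hinv_ge : 2 ≤ 1 / x.1 := by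
      rw [le_div_iff₀ hx1pos]; linarith
    simp only [T0, hf1, hf2]
    have hdiv : x.2 / x.1 ≤ 1 / x.1 - 2 := by
      rw [div_le_iff₀ hx1pos, sub_mul, one_div, inv_mul_cancel₀ (ne_of_gt hx1pos)]
      linarith
    have hu0 : 0 ≤ x.2 / x.1 := div_nonneg h0 hx1pos.le
    refine ⟨⟨by push_cast; linarith, by push_cast; linarith⟩,
      ⟨by push_cast; linarith, by push_cast; linarith⟩, by push_cast; linarith⟩
  -- step 2 : T minus the top edge ⊆ image
  have hBA : ∀ y ∈ T, y.2 ≠ (1/2 : ℝ) → y ∈ T0 '' S := by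
    rintro ⟨u, v⟩ ⟨⟨hu0, hu1⟩, ⟨hv0, hv1⟩, huv⟩ hne
    have hvlt : v < 1/2 := lt_of_le_of_ne hv1 hne
    have hv2 : (0:ℝ) < v + 2 := by linarith
    have hx1 : (0:ℝ) < 1 / (v + 2) := by positivity
    have hinv : 1 / (1 / (v + 2)) = v + 2 := one_div_one_div _
    have hratio : (u / (v + 2)) / (1 / (v + 2)) = u := by field_simp
    have hfv : ⌊v + 2 + 1/2⌋ = (2 : ℤ) := by
      rw [Int.floor_eq_iff]
      constructor <;> push_cast <;> linarith
    have hfu : ⌊u + 1/2⌋ = (0 : ℤ) := by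
      rw [Int.floor_eq_iff]
      constructor <;> push_cast <;> linarith
    refine ⟨(1 / (v + 2), u / (v + 2)), ?_, ?_⟩
    · have hx1le : 1 / (v + 2) ≤ 1/2 := by rw [div_le_iff₀ hv2]; linarith
      have hx1ge : 2/5 ≤ 1 / (v + 2) := by rw [le_div_iff₀ hv2]; linarith
      have hx2 : (0:ℝ) ≤ u / (v + 2) := by positivity
      have hx2le : u / (v + 2) ≤ 1/2 := by rw [div_le_iff₀ hv2]; nlinarith
      refine ⟨⟨by linarith, hx1le⟩, ⟨by linarith, hx2le⟩, ne_of_gt hx1, ?_, ?_, hx2, ?_, hx1ge⟩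
      · rw [hinv]; exact hfv
      · rw [hratio]; exact hfu
      · have h12 : 1 - 2 * (1 / (v + 2)) = v / (v + 2) := by field_simp; ring
        rw [h12]
        exact (div_le_div_iff_of_pos_right hv2).mpr huv
    · simp only [T0, hinv, hratio, hfv, hfu]
      push_cast
      norm_num
  -- step 3 : the symmetric difference is contained in the top edge
  have hsub : symmDiff (T0 '' S) T ⊆ {y : ℝ × ℝ | y.2 = 1/2} := by
    intro y hy
    rw [Set.mem_symmDiff] at hy
    rcases hy with ⟨hyA, hyB⟩ | ⟨hyB, hyA⟩
    · exact absurd (hAB hyA) hyB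
    · by_contra h
      exact hyA (hBA y hyB h)
  refine MeasureTheory.measure_mono_null hsub ?_
  have hline : {y : ℝ × ℝ | y.2 = 1/2} = Set.univ ×ˢ ({1/2} : Set ℝ) := by
    ext ⟨a, b⟩; simp [Set.mem_prod, eq_comm]
  rw [hline, MeasureTheory.Measure.volume_eq_prod, MeasureTheory.Measure.prod_prod,
    Real.volume_singleton, mul_zero]
end
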